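/- arXiv:2011.09187 — 11 statements merged into one kernel-verified Lean document; each statement's English description precedes it below -/
import Mathlib

section
/- Let A ⊆ ℕ₊ be a finite subset containing {1,2}, and let a = max(A). Then there exists an integer b ≤ 1 such that |nA| = (a-1)n + b for all n ≥ (|A|-2)(a-2)(a-1). -/
open Pointwise

lemma mem_nsmul_iff {A : Finset ℕ} {n x : ℕ} :
    x ∈ n • A ↔ ∃ l : Multiset ℕ, l.card = n ∧ (∀ y ∈ l, y ∈ A) ∧ l.sum = x := by
  induction n generalizing x with
  | zero =>
    simp only [zero_nsmul, Finset.mem_zero]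
    constructor
    · rintro rfl; exact ⟨0, by simp⟩
    · rintro ⟨l, hc, _, hs⟩
      rw [Multiset.card_eq_zero] at hc; subst hc; simpa using hs.symm
  | succ n ih =>
    rw [succ_nsmul, Finset.mem_add]
    constructor
    · rintro ⟨y, hy, z, hz, rfl⟩
      obtain ⟨l, hc, hm, hs⟩ := ih.mp hy
      exact ⟨z ::ₘ l, by simp [hc], by intro w hw; rcases Multiset.mem_cons.mp hw with rfl|h; exact hz; exact hm _ h, by simp [hs, add_comm]⟩
    · rintro ⟨l, hc, hm, hs⟩
      have hne : l ≠ 0 := by rintro rfl; simp at hc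
      obtain ⟨z, hz⟩ := Multiset.exists_mem_of_ne_zero hne
      obtain ⟨t, rfl⟩ := Multiset.exists_cons_of_mem hz
      have ht : t.card = n := by simp at hc; omega
      refine ⟨t.sum, ih.mpr ⟨t, ht, fun y hy => hm y (Multiset.mem_cons_of_mem hy), rfl⟩, z, hm z (Multiset.mem_cons_self _ _), ?_⟩
      simp at hs; omega

lemma sum_bounds {A : Finset ℕ} {a : ℕ} (hmax : ∀ y ∈ A, y ≤ a) (h0 : 0 ∉ A)
    (l : Multiset ℕ) (hm : ∀ y ∈ l, y ∈ A) : l.card ≤ l.sum ∧ l.sum ≤ a * l.card := by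
  induction l using Multiset.induction with
  | empty => simp
  | cons z t ih =>
    have hz := hm z (Multiset.mem_cons_self _ _)
    have h1 : 1 ≤ z := by rcases Nat.eq_zero_or_pos z with rfl|h; exact absurd hz h0; exact h
    have h2 := hmax z hz
    obtain ⟨l1, l2⟩ := ih (fun y hy => hm y (Multiset.mem_cons_of_mem hy))
    simp only [Multiset.sum_cons, Multiset.card_cons]
    constructor
    · omega
    · have : a * (t.card + 1) = a * t.card + a := by ring
      omega

lemma low_mem {A : Finset ℕ} (h1 : 1 ∈ A) (h2 : 2 ∈ A) {n x : ℕ} (hl : n ≤ x) (hh : x ≤ 2 * n) :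
    x ∈ n • A := by
  refine mem_nsmul_iff.mpr ⟨Multiset.replicate (x - n) 2 + Multiset.replicate (2 * n - x) 1, ?_, ?_, ?_⟩
  · simp; omega
  · intro y hy
    simp only [Multiset.mem_add, Multiset.mem_replicate] at hy
    rcases hy with ⟨_, rfl⟩|⟨_, rfl⟩; exact h2; exact h1
  · simp [Multiset.sum_replicate]; omega

def NRep (A : Finset ℕ) (a d : ℕ) : Prop :=
  ∃ l : Multiset ℕ, (∀ e ∈ l, ∃ y ∈ A, y + e = a) ∧ l.sum = d

lemma rep_large {A : Finset ℕ} {a : ℕ} (h1 : 1 ∈ A) (h2 : 2 ∈ A) (ha : 3 ≤ a)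
    {d : ℕ} (hd : (a - 2) * (a - 1) ≤ d) : NRep A a d := by
  set q := d / (a - 2) with hq
  set r := d % (a - 2) with hr
  have hr2 : r < a - 2 := Nat.mod_lt _ (by omega)
  have hqr : a - 1 ≤ q := by
    by_contra h
    have : d < (a - 2) * (a - 1) := by
      calc d = (a-2) * q + r := (Nat.div_add_mod d (a-2)).symm
      _ < (a-2) * (a-1) := by nlinarith [Nat.mod_lt d (show 0 < a - 2 by omega)]
    omega
  refine ⟨Multiset.replicate r (a - 1) + Multiset.replicate (q - r) (a - 2), ?_, ?_⟩
  · intro e he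
    simp only [Multiset.mem_add, Multiset.mem_replicate] at he
    rcases he with ⟨_, rfl⟩|⟨_, rfl⟩
    · exact ⟨1, h1, by omega⟩
    · exact ⟨2, h2, by omega⟩
  · simp [Multiset.sum_replicate]
    have : d = (a-2) * q + r := (Nat.div_add_mod d (a-2)).symm
    have hqr' : r ≤ q := by omega
    have h3 : (q - r) * (a - 2) = q * (a-2) - r * (a-2) := Nat.sub_mul q r (a-2)
    have hc : (a-2) * q = q * (a-2) := mul_comm _ _
    have h4 : r * (a - 1) = r * (a - 2) + r := by
      have : a - 1 = (a - 2) + 1 := by omega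
      rw [this]; ring
    have h5 : r * (a-2) ≤ q * (a-2) := Nat.mul_le_mul_right _ hqr'
    omega

lemma exists_reduced {A : Finset ℕ} {a : ℕ} (h1 : 1 ∈ A) (ha : 3 ≤ a) :
    ∀ (N : ℕ) (l : Multiset ℕ), l.card ≤ N → (∀ e ∈ l, ∃ y ∈ A, y + e = a) →
    ∃ l' : Multiset ℕ, (∀ e ∈ l', ∃ y ∈ A, y + e = a) ∧ l'.sum = l.sum ∧ l'.card ≤ l.card ∧
      (∀ e ∈ l', 1 ≤ e) ∧ (∀ e, e ≤ a - 2 → l'.count e ≤ a - 2) := by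
  intro N
  induction N with
  | zero =>
    intro l hc _
    have : l = 0 := by rwa [Nat.le_zero, Multiset.card_eq_zero] at hc
    subst this
    exact ⟨0, by simp, by simp, by simp, by simp, by intro e he; simp⟩
  | succ N ih =>
    intro l hc hm
    by_cases h0 : (0 : ℕ) ∈ l
    · obtain ⟨t, rfl⟩ := Multiset.exists_cons_of_mem h0
      obtain ⟨l', p1, p2, p3, p4, p5⟩ := ih t (by simp at hc ⊢; omega)
        (fun e he => hm e (Multiset.mem_cons_of_mem he))
      exact ⟨l', p1, by simpa using p2, by simp; omega, p4, p5⟩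
    · by_cases hB : ∃ e ∈ l, e ≤ a - 2 ∧ a - 1 ≤ l.count e
      · obtain ⟨e, hel, he2, hcnt⟩ := hB
        have he1 : 1 ≤ e := by
          rcases Nat.eq_zero_or_pos e with rfl|h; exact absurd hel h0; exact h
        have hle : Multiset.replicate (a-1) e ≤ l := Multiset.le_count_iff_replicate_le.mp hcnt
        obtain ⟨t, rfl⟩ := Multiset.le_iff_exists_add.mp hle
        set l₂ := Multiset.replicate e (a-1) + t with hl₂
        have hcard2 : l₂.card ≤ N := by
          simp [hl₂] at hc ⊢; omega
        have hmem : ∀ f ∈ l₂, ∃ y ∈ A, y + f = a := by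
          intro f hf
          simp only [hl₂, Multiset.mem_add, Multiset.mem_replicate] at hf
          rcases hf with ⟨_, rfl⟩|hf
          · exact ⟨1, h1, by omega⟩
          · exact hm f (by simp [hf])
        obtain ⟨l', p1, p2, p3, p4, p5⟩ := ih l₂ hcard2 hmem
        refine ⟨l', p1, ?_, ?_, p4, p5⟩
        · rw [p2]; simp [hl₂, Multiset.sum_replicate]; try ring
        · have e1 : (Multiset.replicate (a-1) e + t).card = (a-1) + t.card := by simp
          have e2 : l₂.card = e + t.card := by simp [hl₂]
          omega
      · push_neg at hB
        refine ⟨l, hm, rfl, le_refl _, ?_, ?_⟩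
        · intro e he
          rcases Nat.eq_zero_or_pos e with rfl|h; exact absurd he h0; exact h
        · intro e he
          by_contra h
          push_neg at h
          have hel : e ∈ l := by
            rw [← Multiset.count_pos]; omega
          exact absurd (hB e hel he) (by omega)

lemma card_bound {A : Finset ℕ} {a n : ℕ} (h0 : 0 ∉ A) (h1 : 1 ∈ A) (haA : a ∈ A) (ha : 3 ≤ a)
    (hn : (A.card - 2) * (a - 2) * (a - 1) ≤ n)
    (l : Multiset ℕ) (hm : ∀ e ∈ l, ∃ y ∈ A, y + e = a)
    (hpos : ∀ e ∈ l, 1 ≤ e) (hcnt : ∀ e, e ≤ a - 2 → l.count e ≤ a - 2)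
    (hsum : l.sum ≤ (a - 2) * n) : l.card ≤ n := by
  classical
  set u := l.filter (fun e => e = a - 1) with hu
  set t := l.filter (fun e => ¬ e = a - 1) with ht
  have hsplit : u + t = l := Multiset.filter_add_not _ l
  have hcard : l.card = u.card + t.card := by rw [← hsplit]; simp
  have hsums : l.sum = u.sum + t.sum := by rw [← hsplit]; simp
  have huval : ∀ x ∈ u, x = a - 1 := fun x hx => (Multiset.mem_filter.mp hx).2
  have husum : u.sum = u.card * (a - 1) := by
    have : u = Multiset.replicate u.card (a-1) := (Multiset.eq_replicate_card).mpr huval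
    rw [this]; simp [Multiset.sum_replicate]; try ring
  set T := ((A.erase a).erase 1).image (fun y => a - y) with hT
  have hsub : t.toFinset ⊆ T := by
    intro e he
    rw [Multiset.mem_toFinset] at he
    have he' : e ∈ l := Multiset.mem_of_mem_filter he
    have hne : ¬ e = a - 1 := (Multiset.mem_filter.mp he).2
    obtain ⟨y, hyA, hy⟩ := hm e he'
    have h1e : 1 ≤ e := hpos e he'
    refine Finset.mem_image.mpr ⟨y, ?_, by omega⟩
    refine Finset.mem_erase.mpr ⟨?_, Finset.mem_erase.mpr ⟨?_, hyA⟩⟩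
    · omega
    · omega
  have hTcard : T.card ≤ A.card - 2 := by
    calc T.card ≤ ((A.erase a).erase 1).card := Finset.card_image_le
    _ = A.card - 2 := by
      rw [Finset.card_erase_of_mem (Finset.mem_erase.mpr ⟨by omega, h1⟩),
        Finset.card_erase_of_mem haA]
      omega
  have htcard : t.card ≤ (A.card - 2) * (a - 2) := by
    have : t.card = ∑ e ∈ t.toFinset, t.count e := (Multiset.toFinset_sum_count_eq t).symm
    rw [this]
    calc ∑ e ∈ t.toFinset, t.count e ≤ ∑ e ∈ t.toFinset, (a - 2) := by
          refine Finset.sum_le_sum ?_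
          intro e he
          rw [Multiset.mem_toFinset] at he
          have he' : e ∈ l := Multiset.mem_of_mem_filter he
          have hne : ¬ e = a - 1 := (Multiset.mem_filter.mp he).2
          obtain ⟨y, hyA, hy⟩ := hm e he'
          have h1e : 1 ≤ e := hpos e he'
          have hy0 : y ≠ 0 := fun hc => h0 (hc ▸ hyA)
          have hele : e ≤ a - 2 := by omega
          calc t.count e ≤ l.count e := Multiset.count_le_of_le e (Multiset.filter_le _ l)
          _ ≤ a - 2 := hcnt e hele
    _ = t.toFinset.card * (a - 2) := by rw [Finset.sum_const, smul_eq_mul]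
    _ ≤ (A.card - 2) * (a - 2) := by
          exact Nat.mul_le_mul_right _ (le_trans (Finset.card_le_card hsub) hTcard)
  have h5 : u.card * (a - 1) ≤ (a - 2) * n := by omega
  have h6 : t.card * (a - 1) ≤ (A.card - 2) * (a - 2) * (a - 1) :=
    Nat.mul_le_mul_right _ htcard
  have h7 : l.card * (a - 1) ≤ n * (a - 1) := by
    have e1 : l.card * (a - 1) = u.card * (a-1) + t.card * (a-1) := by rw [hcard]; ring
    have e2 : n * (a - 1) = n * (a - 2) + n := by
      have : a - 1 = (a - 2) + 1 := by omega
      rw [this]; ring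
    have e3 : (a - 2) * n = n * (a - 2) := mul_comm _ _
    omega
  exact Nat.le_of_mul_le_mul_right h7 (by omega)

lemma map_sub_sum {a : ℕ} (l : Multiset ℕ) (h : ∀ y ∈ l, y ≤ a) :
    (l.map (fun y => a - y)).sum + l.sum = a * l.card := by
  induction l using Multiset.induction with
  | empty => simp
  | cons z t ih =>
    have hz := h z (Multiset.mem_cons_self _ _)
    have := ih (fun y hy => h y (Multiset.mem_cons_of_mem hy))
    simp only [Multiset.map_cons, Multiset.sum_cons, Multiset.card_cons]
    have e1 : a * (t.card + 1) = a * t.card + a := by ring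
    omega

theorem stmt3 (A : Finset ℕ) (h0 : 0 ∉ A) (h1 : 1 ∈ A) (h2 : 2 ∈ A)
    (a : ℕ) (ha : a = A.max' ⟨1, h1⟩) :
    ∃ b : ℤ, b ≤ 1 ∧ ∀ n : ℕ, (A.card - 2) * (a - 2) * (a - 1) ≤ n →
      ((n • A).card : ℤ) = ((a : ℤ) - 1) * n + b := by
  classical
  have haA : a ∈ A := ha ▸ A.max'_mem _
  have hmax : ∀ y ∈ A, y ≤ a := fun y hy => ha ▸ A.le_max' y hy
  have ha2 : 2 ≤ a := hmax 2 h2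
  by_cases hA2 : a = 2
  · -- A = {1, 2}
    refine ⟨1, le_refl _, ?_⟩
    intro n _
    have hset : n • A = Finset.Icc n (2 * n) := by
      ext x
      rw [Finset.mem_Icc]
      constructor
      · intro hx
        obtain ⟨l, hc, hmem, hs⟩ := mem_nsmul_iff.mp hx
        obtain ⟨b1, b2⟩ := sum_bounds hmax h0 l hmem
        subst hA2
        constructor <;> omega
      · rintro ⟨u, v⟩; exact low_mem h1 h2 u v
    rw [hset, Nat.card_Icc, hA2]
    push_cast
    omega
  · have ha3 : 3 ≤ a := by omega
    have hk3 : 3 ≤ A.card := by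
      have hsubA : ({1, 2, a} : Finset ℕ) ⊆ A := by
        intro x hx
        simp only [Finset.mem_insert, Finset.mem_singleton] at hx
        rcases hx with rfl|rfl|rfl <;> assumption
      have hc3 : ({1, 2, a} : Finset ℕ).card = 3 := by
        rw [Finset.card_insert_of_notMem (by simp; omega),
          Finset.card_insert_of_notMem (by simp; omega), Finset.card_singleton]
      rw [← hc3]
      exact Finset.card_le_card hsubA
    set M := (a - 2) * (a - 1) with hM
    set G := (Finset.range M).filter (fun d => ¬ NRep A a d) with hG
    have hGM : ∀ d ∈ G, d < M := by
      intro d hd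
      exact Finset.mem_range.mp (Finset.mem_filter.mp hd).1
    have hGcard : G.card ≤ M := le_trans (Finset.card_filter_le _ _) (by simp)
    refine ⟨1 - G.card, by simp, ?_⟩
    intro n hn
    have hNM : M ≤ n := by
      refine le_trans ?_ hn
      have : 1 ≤ A.card - 2 := by omega
      calc M = 1 * M := (one_mul M).symm
      _ ≤ (A.card - 2) * M := Nat.mul_le_mul_right _ this
      _ = (A.card - 2) * (a-2) * (a-1) := by rw [hM]; ring
    have hMn : M ≤ (a - 2) * n := by
      calc M = (a-2) * (a-1) := hM
      _ ≤ (a-2) * n := by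
        refine Nat.mul_le_mul_left _ ?_
        have h9 : a - 1 ≤ (a-2)*(a-1) := Nat.le_mul_of_pos_left _ (by omega)
        omega
    have hsubmul : (a - 2) * n + 2 * n = a * n := by
      have := Nat.sub_mul a 2 n
      have h2n : 2 * n ≤ a * n := Nat.mul_le_mul_right _ (by omega)
      omega
    have key : n • A = (Finset.Icc n (a * n)).filter (fun x => a * n - x ∉ G) := by
      ext x
      simp only [Finset.mem_filter, Finset.mem_Icc]
      constructor
      · intro hx
        obtain ⟨l, hc, hmem, hs⟩ := mem_nsmul_iff.mp hx
        obtain ⟨b1, b2⟩ := sum_bounds hmax h0 l hmem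
        rw [hc] at b1 b2
        have hxu : x ≤ a * n := by omega
        refine ⟨⟨by omega, hxu⟩, ?_⟩
        intro hGmem
        have hyb : ∀ y ∈ l, y ≤ a := fun y hy => hmax y (hmem y hy)
        have hrep : NRep A a (a * n - x) := by
          refine ⟨l.map (fun y => a - y), ?_, ?_⟩
          · intro e he
            obtain ⟨y, hy, rfl⟩ := Multiset.mem_map.mp he
            exact ⟨y, hmem y hy, by have := hyb y hy; omega⟩
          · have := map_sub_sum l hyb
            rw [hc, hs] at this
            omega
        exact (Finset.mem_filter.mp hGmem).2 hrep
      · rintro ⟨⟨hxl, hxu⟩, hGmem⟩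
        by_cases hx2 : x ≤ 2 * n
        · exact low_mem h1 h2 hxl hx2
        · push_neg at hx2
          set d := a * n - x with hd
          have hdb : d ≤ (a - 2) * n := by omega
          have hrep : NRep A a d := by
            by_cases hdM : M ≤ d
            · exact rep_large h1 h2 ha3 hdM
            · by_contra hnr
              exact hGmem (Finset.mem_filter.mpr ⟨Finset.mem_range.mpr (by omega), hnr⟩)
          obtain ⟨l, hmem, hsum⟩ := hrep
          obtain ⟨l', p1, p2, p3, p4, p5⟩ := exists_reduced h1 ha3 l.card l le_rfl hmem
          have hlc : l'.card ≤ n :=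
            card_bound h0 h1 haA ha3 hn l' p1 p4 p5 (by rw [p2, hsum]; exact hdb)
          have hl'b : ∀ e ∈ l', e ≤ a := by
            intro e he
            obtain ⟨y, hyA, hy⟩ := p1 e he
            omega
          refine mem_nsmul_iff.mpr
            ⟨l'.map (fun e => a - e) + Multiset.replicate (n - l'.card) a, ?_, ?_, ?_⟩
          · simp; omega
          · intro y hy
            simp only [Multiset.mem_add, Multiset.mem_replicate, Multiset.mem_map] at hy
            rcases hy with ⟨e, he, rfl⟩|⟨_, rfl⟩
            · obtain ⟨y', hy'A, hy'⟩ := p1 e he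
              have : a - e = y' := by omega
              rwa [this]
            · exact haA
          · have hms := map_sub_sum l' hl'b
            rw [p2, hsum] at hms
            simp only [Multiset.sum_add, Multiset.sum_replicate, smul_eq_mul]
            have e1 : (n - l'.card) * a = n * a - l'.card * a := Nat.sub_mul _ _ _
            have e2 : n * a = a * n := mul_comm _ _
            have e3 : l'.card * a = a * l'.card := mul_comm _ _
            have e4 : a * l'.card ≤ a * n := Nat.mul_le_mul_left _ hlc
            omega
    rw [key]
    have himg : (Finset.Icc n (a * n)).filter (fun x => a * n - x ∉ G)
        = Finset.Icc n (a * n) \ G.image (fun d => a * n - d) := by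
      ext x
      simp only [Finset.mem_filter, Finset.mem_sdiff, Finset.mem_Icc, Finset.mem_image]
      constructor
      · rintro ⟨hx, hnG⟩
        refine ⟨hx, ?_⟩
        rintro ⟨d, hdG, rfl⟩
        have hdM := hGM d hdG
        have : a * n - (a * n - d) = d := by omega
        rw [this] at hnG
        exact hnG hdG
      · rintro ⟨hx, hni⟩
        refine ⟨hx, fun hc => hni ⟨a * n - x, hc, by omega⟩⟩
    rw [himg]
    have hsubI : G.image (fun d => a * n - d) ⊆ Finset.Icc n (a * n) := by
      intro x hx
      obtain ⟨d, hdG, rfl⟩ := Finset.mem_image.mp hx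
      have hdM := hGM d hdG
      rw [Finset.mem_Icc]
      omega
    have hinj : (G.image (fun d => a * n - d)).card = G.card := by
      apply Finset.card_image_of_injOn
      intro d1 h1' d2 h2' he
      have q1 := hGM d1 h1'
      have q2 := hGM d2 h2'
      have hMa : M ≤ a * n := le_trans hMn (by omega)
      have he' : a * n - d1 = a * n - d2 := he
      omega
    rw [Finset.card_sdiff_of_subset hsubI, hinj, Nat.card_Icc]
    have hle : G.card + n ≤ a * n + 1 := by omega
    have hnat : a * n + 1 - n - G.card + G.card + n = a * n + 1 := by omega
    have hfin : ((a * n + 1 - n - G.card : ℕ) : ℤ) = (a : ℤ) * n + 1 - n - G.card := by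
      omega
    rw [hfin]
    ring
end

section
/- Let A ⊆ ℕ₊ be a finite set containing {1,2}, with f = max(A) and g = |A|. If f ≤ 2g - 2, then β_A(n) = |nA| - (2n-1)(g-1) tends to -∞ as n → ∞. -/
open Pointwise

theorem stmt4 (A : Finset ℕ) (h0 : 0 ∉ A) (h1 : 1 ∈ A) (h2 : 2 ∈ A)
    (f g : ℕ) (hf : f = A.max' ⟨1, h1⟩) (hg : g = A.card)
    (hfg : f ≤ 2 * g - 2) :
    Filter.Tendsto (fun n : ℕ => ((n • A).card : ℤ) - (2 * n - 1) * ((g : ℤ) - 1))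
      Filter.atTop Filter.atBot := by
  have hg2 : 2 ≤ g := by
    have hsub : ({1, 2} : Finset ℕ) ⊆ A := by
      intro x hx
      simp only [Finset.mem_insert, Finset.mem_singleton] at hx
      rcases hx with h | h <;> subst h <;> assumption
    have := Finset.card_le_card hsub
    simp at this
    omega
  have hbound : ∀ n : ℕ, ∀ x ∈ n • A, n ≤ x ∧ x ≤ n * f := by
    intro n
    induction n with
    | zero =>
      intro x hx
      simp [zero_nsmul] at hx
      omega
    | succ n ih =>
      intro x hx
      rw [succ_nsmul, Finset.mem_add] at hx
      obtain ⟨y, hy, a, ha, rfl⟩ := hx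
      have h1a : 1 ≤ a := Nat.one_le_iff_ne_zero.2 (fun h => h0 (h ▸ ha))
      have h2a : a ≤ f := hf ▸ Finset.le_max' A a ha
      have := ih y hy
      constructor <;> nlinarith [this.1, this.2]
  have hcard : ∀ n : ℕ, 1 ≤ n → ((n • A).card : ℤ) ≤ n * f - n + 1 := by
    intro n hn
    have hsub : n • A ⊆ Finset.Icc n (n * f) := fun x hx =>
      Finset.mem_Icc.2 (hbound n x hx)
    have hle := Finset.card_le_card hsub
    rw [Nat.card_Icc] at hle
    have hf1 : 1 ≤ f := hf ▸ Finset.le_max' A 1 h1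
    have hnf : n ≤ n * f := Nat.le_mul_of_pos_right n (by omega)
    omega
  have hf2 : (f : ℤ) ≤ 2 * (g : ℤ) - 2 := by omega
  rw [Filter.tendsto_atBot]
  intro b
  filter_upwards [Filter.eventually_ge_atTop (g + b.natAbs + 1)] with n hn
  have hn1 : 1 ≤ n := by omega
  have hc := hcard n hn1
  have hnb : (g : ℤ) + b.natAbs + 1 ≤ (n : ℤ) := by exact_mod_cast hn
  have habs : -b ≤ (b.natAbs : ℤ) := by omega
  have hmul : (n : ℤ) * f ≤ (n : ℤ) * (2 * g - 2) :=
    mul_le_mul_of_nonneg_left hf2 (by positivity)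
  nlinarith [hc, hmul, habs, hnb]
end

section
/- Let A ⊆ ℕ₊ be a finite set containing {1,2}, with f = max(A) and g = |A|. If f ≥ 2g, then β_A(n) = |nA| - (2n-1)(g-1) tends to +∞ as n → ∞. -/
open Pointwise

private lemma base_icc (A : Finset ℕ) (h1 : 1 ∈ A) (h2 : 2 ∈ A) :
    ∀ n x : ℕ, n ≤ x → x ≤ 2 * n → x ∈ n • A := by
  intro n
  induction n with
  | zero => intro x hx hx'; interval_cases x; simp [zero_nsmul]
  | succ n ih =>
    intro x hx hx'
    rw [succ_nsmul]
    rcases le_or_gt x (2 * n + 1) with h | h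
    · have : x - 1 ∈ n • A := ih (x - 1) (by omega) (by omega)
      have := Finset.add_mem_add this h1
      have hx1 : x - 1 + 1 = x := by omega
      rwa [hx1] at this
    · have : 2 * n ∈ n • A := ih (2 * n) (by omega) (by omega)
      have := Finset.add_mem_add this h2
      have hx1 : 2 * n + 2 = x := by omega
      rwa [hx1] at this

private lemma main_icc (A : Finset ℕ) (h1 : 1 ∈ A) (h2 : 2 ∈ A) (f : ℕ)
    (hfA : f ∈ A) (hf4 : 4 ≤ f) :
    ∀ m x : ℕ, f - 2 + m ≤ x → x ≤ 2 * (f - 2 + m) + m * (f - 2) →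
      x ∈ (f - 2 + m) • A := by
  intro m
  induction m with
  | zero => intro x hx hx'; exact base_icc A h1 h2 _ x hx (by omega)
  | succ m ih =>
    intro x hx hx'
    have hstep : (f - 2 + (m + 1)) • A = (f - 2 + m) • A + A := by
      have : f - 2 + (m + 1) = (f - 2 + m) + 1 := by omega
      rw [this, succ_nsmul]
    rw [hstep]
    set L := f - 2 + m with hL
    set U := 2 * (f - 2 + m) + m * (f - 2) with hU
    rcases le_or_gt x (U + 1) with h | h
    · have : x - 1 ∈ (f - 2 + m) • A := ih (x - 1) (by omega) (by omega)
      have := Finset.add_mem_add this h1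
      have hx1 : x - 1 + 1 = x := by omega
      rwa [hx1] at this
    · rcases le_or_gt x (U + 2) with h' | h'
      · have : x - 2 ∈ (f - 2 + m) • A := ih (x - 2) (by omega) (by omega)
        have := Finset.add_mem_add this h2
        have hx1 : x - 2 + 2 = x := by omega
        rwa [hx1] at this
      · have hmem : x - f ∈ (f - 2 + m) • A := by
          apply ih (x - f) (by omega)
          have hr : (m + 1) * (f - 2) = m * (f - 2) + (f - 2) := by ring
          omega
        have := Finset.add_mem_add hmem hfA
        have hx1 : x - f + f = x := by omega
        rwa [hx1] at this

theorem stmt5 (A : Finset ℕ) (h0 : 0 ∉ A) (h1 : 1 ∈ A) (h2 : 2 ∈ A)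
    (f g : ℕ) (hf : f = A.max' ⟨1, h1⟩) (hg : g = A.card)
    (hfg : 2 * g ≤ f) :
    Filter.Tendsto (fun n : ℕ => ((n • A).card : ℤ) - (2 * n - 1) * ((g : ℤ) - 1))
      Filter.atTop Filter.atTop := by
  have hfA : f ∈ A := hf ▸ A.max'_mem _
  have hg2 : 2 ≤ g := by
    rw [hg]
    have : ({1, 2} : Finset ℕ) ⊆ A := by
      intro x hx; simp at hx; rcases hx with rfl | rfl <;> assumption
    calc 2 = ({1, 2} : Finset ℕ).card := by decide
    _ ≤ A.card := Finset.card_le_card this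
  have hf4 : 4 ≤ f := by omega
  -- lower bound on card
  have hcard : ∀ m : ℕ, (f - 2 + m) + m * (f - 2) + 1 ≤ ((f - 2 + m) • A).card := by
    intro m
    have hsub : Finset.Icc (f - 2 + m) (2 * (f - 2 + m) + m * (f - 2)) ⊆ (f - 2 + m) • A := by
      intro x hx
      rw [Finset.mem_Icc] at hx
      exact main_icc A h1 h2 f hfA hf4 m x hx.1 hx.2
    have := Finset.card_le_card hsub
    rwa [Nat.card_Icc, show 2 * (f - 2 + m) + m * (f - 2) + 1 - (f - 2 + m)
      = (f - 2 + m) + m * (f - 2) + 1 from by omega] at this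
  apply Filter.tendsto_atTop_mono' _ (show ∀ᶠ n : ℕ in Filter.atTop,
      (n : ℤ) + (1 - (f : ℤ) + (g : ℤ) - ((f : ℤ) - 2) * ((f : ℤ) - 2))
        ≤ ((n • A).card : ℤ) - (2 * n - 1) * ((g : ℤ) - 1) from ?_)
  · exact Filter.tendsto_atTop_add_const_right _ _ tendsto_natCast_atTop_atTop
  · rw [Filter.eventually_atTop]
    refine ⟨f, fun n hn => ?_⟩
    obtain ⟨m, hm⟩ : ∃ m, n = f - 2 + m := ⟨n - (f - 2), by omega⟩
    subst hm
    have hc := hcard m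
    have hc' : ((f : ℤ) - 2 + m) + m * ((f : ℤ) - 2) + 1 ≤ (((f - 2 + m) • A).card : ℤ) := by
      have : (((f - 2 + m) + m * (f - 2) + 1 : ℕ) : ℤ) ≤ (((f - 2 + m) • A).card : ℤ) := by
        exact_mod_cast hc
      push_cast at this
      rw [show ((f - 2 : ℕ) : ℤ) = (f : ℤ) - 2 from by omega] at this
      linarith
    have hgf : (2 : ℤ) * g ≤ f := by exact_mod_cast hfg
    have hncast : ((f - 2 + m : ℕ) : ℤ) = (f : ℤ) - 2 + m := by
      push_cast [show ((f - 2 : ℕ) : ℤ) = (f : ℤ) - 2 from by omega]; ring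
    rw [hncast]
    nlinarith [hc', hgf, (show (0 : ℤ) ≤ m from by positivity), (show (4 : ℤ) ≤ f from by exact_mod_cast hf4)]
end

section
/- Let S ⊆ ℕ be a numerical semigroup of genus g = |ℕ \ S| ≥ 2, with gapset G = ℕ \ S. Then the Buchweitz set B(S) = {n ≥ 2 : |nG| > (2n-1)(g-1)} is finite. -/
open Pointwise

theorem stmt9 (S : Set ℕ) (h0 : (0 : ℕ) ∈ S)
    (hadd : ∀ a ∈ S, ∀ b ∈ S, a + b ∈ S) (hfin : Sᶜ.Finite)
    (G : Finset ℕ) (hG : G = hfin.toFinset) (hg2 : 2 ≤ G.card) :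
    {n : ℕ | 2 ≤ n ∧ (2 * n - 1) * ((G.card : ℤ) - 1) < ((n • G).card : ℤ)}.Finite := by
  classical
  have hmemG : ∀ x, x ∈ G ↔ x ∉ S := by
    intro x; rw [hG, Set.Finite.mem_toFinset]; exact Iff.rfl
  have hGne : G.Nonempty := Finset.card_pos.mp (by omega)
  set F := G.max' hGne with hFdef
  have hFG : F ∈ G := G.max'_mem hGne
  have hle : ∀ x ∈ G, x ≤ F := fun x hx => G.le_max' x hx
  have hpos : ∀ x ∈ G, 1 ≤ x := by
    intro x hx
    rcases Nat.eq_zero_or_pos x with h | h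
    · exact absurd h0 (h ▸ (hmemG x).mp hx)
    · exact h
  have hF1 : 1 ≤ F := hpos F hFG
  -- F ≥ 2 since there are at least two gaps
  have hF2 : 2 ≤ F := by
    by_contra h
    have hFeq : F = 1 := by omega
    have : G ⊆ {1} := by
      intro x hx
      have := hle x hx; have := hpos x hx
      simp only [Finset.mem_singleton]; omega
    have := Finset.card_le_card this
    simp at this; omega
  -- covering : for 1 ≤ v ≤ F-1, v ∈ G or F - v ∈ G
  have hcover : ∀ v, 1 ≤ v → v ≤ F - 1 → v ∈ G ∨ (F - v) ∈ G := by
    intro v h1 h2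
    by_contra hc
    push_neg at hc
    have hvS : v ∈ S := by by_contra h; exact hc.1 ((hmemG v).mpr h)
    have hv2 : F - v ∈ S := by by_contra h; exact hc.2 ((hmemG _).mpr h)
    have hsum : v + (F - v) ∈ S := hadd _ hvS _ hv2
    have hveq : v + (F - v) = F := by omega
    rw [hveq] at hsum
    exact (hmemG F).mp hFG hsum
  set G' := G.erase F with hG'
  have hG'card : G'.card = G.card - 1 := Finset.card_erase_of_mem hFG
  have hG'mem : ∀ x ∈ G', 1 ≤ x ∧ x ≤ F - 1 := by
    intro x hx
    have hxG := Finset.mem_of_mem_erase hx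
    have h1 := Finset.ne_of_mem_erase hx
    have h2 := hle x hxG; have h3 := hpos x hxG
    omega
  set H := G'.image (fun x => F - x) with hH
  have hHcard : H.card = G.card - 1 := by
    rw [hH, Finset.card_image_of_injOn, hG'card]
    intro a ha b hb hab
    have ha' := hG'mem a ha; have hb' := hG'mem b hb
    simp only at hab; omega
  have hHmem : ∀ v ∈ H, ∃ x ∈ G, x ≠ F ∧ F - x = v := by
    intro v hv
    rw [hH, Finset.mem_image] at hv
    obtain ⟨x, hx, hxv⟩ := hv
    exact ⟨x, Finset.mem_of_mem_erase hx, Finset.ne_of_mem_erase hx, hxv⟩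
  have hcover2 : Finset.Icc 1 (F - 1) ⊆ G' ∪ H := by
    intro v hv
    simp only [Finset.mem_Icc] at hv
    rcases hcover v hv.1 hv.2 with h | h
    · exact Finset.mem_union_left _ (Finset.mem_erase.mpr ⟨by omega, h⟩)
    · apply Finset.mem_union_right
      rw [hH, Finset.mem_image]
      exact ⟨F - v, Finset.mem_erase.mpr ⟨by omega, h⟩, by omega⟩
  have hFbound : F - 1 ≤ 2 * (G.card - 1) := by
    have h1 := Finset.card_le_card hcover2
    have h2 := Finset.card_union_le G' H
    rw [Nat.card_Icc] at h1
    omega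
  -- membership bounds for n • G
  have hsub : ∀ n : ℕ, ∀ x ∈ n • G, n ≤ x ∧ x ≤ n * F := by
    intro n
    induction n with
    | zero =>
      intro x hx
      have : x ∈ (0 : Finset ℕ) := hx
      rw [Finset.mem_zero] at this
      omega
    | succ n ih =>
      intro x hx
      have hx' : x ∈ n • G + G := hx
      rw [Finset.mem_add] at hx'
      obtain ⟨y, hy, z, hz, hyz⟩ := hx'
      have h1 := ih y hy
      have h2 := hle z hz; have h3 := hpos z hz
      have hr : (n + 1) * F = n * F + F := by ring
      omega
  -- n • G lands in Icc n (n * F)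
  have hsubIcc : ∀ n : ℕ, n • G ⊆ Finset.Icc n (n * F) := by
    intro n x hx
    have := hsub n x hx
    simp only [Finset.mem_Icc]; omega
  -- main: for n ≥ G.card, the cardinality bound holds
  apply Set.Finite.subset (Set.finite_Iio (G.card))
  intro n hn
  simp only [Set.mem_setOf_eq] at hn
  obtain ⟨hn2, hcard⟩ := hn
  simp only [Set.mem_Iio]
  by_contra hge
  push_neg at hge  -- G.card ≤ n
  have hcard' : ((n • G).card : ℤ) ≤ (2 * n - 1) * ((G.card : ℤ) - 1) → False := fun h =>
    absurd hcard (not_lt.mpr h)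
  apply hcard'
  have hIccCard : (Finset.Icc n (n * F)).card = n * F + 1 - n := Nat.card_Icc _ _
  have hnF : n ≤ n * F := Nat.le_mul_of_pos_right n (by omega)
  rcases Nat.lt_or_ge (F - 1) (2 * (G.card - 1)) with hA | hB
  · -- Case A : F ≤ 2 G.card - 2
    have h1 : (n • G).card + n ≤ n * F + 1 := by
      have h := Finset.card_le_card (hsubIcc n)
      rw [hIccCard] at h
      omega
    have h2 : F + 2 ≤ 2 * G.card := by omega
    have h1' : ((n • G).card : ℤ) + n ≤ (n : ℤ) * F + 1 := by exact_mod_cast h1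
    have h2' : ((F : ℤ)) + 2 ≤ 2 * (G.card : ℤ) := by exact_mod_cast h2
    have hcn : (G.card : ℤ) ≤ n := by exact_mod_cast hge
    have hg2' : (2 : ℤ) ≤ (G.card : ℤ) := by exact_mod_cast hg2
    have hn2' : (2 : ℤ) ≤ (n : ℤ) := by exact_mod_cast hn2
    have hp : (n : ℤ) * F ≤ (n : ℤ) * (2 * (G.card : ℤ) - 2) :=
      mul_le_mul_of_nonneg_left (by linarith) (by linarith)
    have hh : (2 * (n:ℤ) - 1) * ((G.card : ℤ) - 1)
        = 2 * ((n:ℤ) * (G.card : ℤ)) - 2 * n - (G.card : ℤ) + 1 := by ring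
    have hh2 : (n:ℤ) * (2 * (G.card : ℤ) - 2) = 2 * ((n:ℤ) * (G.card : ℤ)) - 2 * n := by ring
    linarith
  · -- Case B : F = 2 * G.card - 1
    have hFeq : F = 2 * G.card - 1 := by omega
    -- pairing: G' and H are disjoint
    have hdisj : (G' ∩ H).card = 0 := by
      have h1 := Finset.card_union_add_card_inter G' H
      have h2 := Finset.card_le_card hcover2
      rw [Nat.card_Icc] at h2
      omega
    have hpair : ∀ z ∈ G, z < F → (F - z) ∈ S := by
      intro z hz hzF
      by_contra hns
      have hzG' : z ∈ G' := Finset.mem_erase.mpr ⟨by omega, hz⟩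
      have hFz : F - z ∈ G := (hmemG _).mpr hns
      have hFzG' : F - z ∈ G' := by
        refine Finset.mem_erase.mpr ⟨?_, hFz⟩
        have := hpos z hz; omega
      have hFzH : F - z ∈ H := by
        rw [hH, Finset.mem_image]; exact ⟨z, hzG', rfl⟩
      have : F - z ∈ G' ∩ H := Finset.mem_inter.mpr ⟨hFzG', hFzH⟩
      have := Finset.card_pos.mpr ⟨F - z, this⟩
      omega
    -- key avoidance lemma
    have hB' : ∀ m : ℕ, ∀ y ∈ m • G, ∀ v, 1 ≤ v → v ≤ F → (F - v) ∈ S → y + v ≠ m * F := by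
      intro m
      induction m with
      | zero =>
        intro y hy v h1 _ _
        have : y ∈ (0 : Finset ℕ) := hy
        rw [Finset.mem_zero] at this
        omega
      | succ m ih =>
        intro y hy v h1 h2 h3 heq
        have hy' : y ∈ m • G + G := hy
        rw [Finset.mem_add] at hy'
        obtain ⟨y', hy'', z, hz, hyz⟩ := hy'
        have hb1 := hsub m y' hy''
        have hb2 := hle z hz; have hb3 := hpos z hz
        have hr : (m + 1) * F = m * F + F := by ring
        -- y' + z + v = m*F + F
        have key : y' + z + v = m * F + F := by omega
        set w := F - z with hw
        have hzw : z + w = F := by omega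
        have hwv : w ≤ v := by omega
        set v' := v - w with hv'
        have hvv : v' + w = v := by omega
        have hyv : y' + v' = m * F := by omega
        rcases Nat.eq_zero_or_pos v' with h0v | h0v
        · -- z = F - v, contradiction with F - v ∈ S
          have hzv : z = F - v := by omega
          exact (hmemG z).mp hz (hzv ▸ h3)
        · have hwS : w ∈ S := by
            rcases Nat.lt_or_ge z F with hzF | hzF
            · exact hpair z hz hzF
            · have : w = 0 := by omega
              rw [this]; exact h0
          have hFv' : F - v' ∈ S := by
            have haeq : F - v' = (F - v) + w := by omega
            rw [haeq]; exact hadd _ h3 _ hwS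
          exact ih y' hy'' v' h0v (by omega) hFv' hyv
    -- the missing set
    set U : Finset ℕ := Finset.Icc 1 F \ H with hU
    have hUcard : F - (G.card - 1) ≤ U.card := by
      have h1 : (Finset.Icc 1 F).card - H.card ≤ U.card := Finset.le_card_sdiff H (Finset.Icc 1 F)
      rw [Nat.card_Icc] at h1
      omega
    have hUS : ∀ v ∈ U, 1 ≤ v ∧ v ≤ F ∧ (F - v) ∈ S := by
      intro v hv
      rw [hU, Finset.mem_sdiff, Finset.mem_Icc] at hv
      obtain ⟨⟨hv1, hv2⟩, hvH⟩ := hv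
      refine ⟨hv1, hv2, ?_⟩
      by_contra hns
      have hFv : F - v ∈ G := (hmemG _).mpr hns
      have hne : F - v ≠ F := by omega
      apply hvH
      rw [hH, Finset.mem_image]
      exact ⟨F - v, Finset.mem_erase.mpr ⟨hne, hFv⟩, by omega⟩
    set M : Finset ℕ := U.image (fun v => n * F - v) with hM
    have hFnF : F ≤ n * F := Nat.le_mul_of_pos_left F (by omega)
    have hMcard : M.card = U.card := by
      rw [hM]
      apply Finset.card_image_of_injOn
      intro a ha b hb hab
      have ha' := hUS a ha; have hb' := hUS b hb
      simp only at hab; omega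
    have hn2' : (2 : ℤ) ≤ (n : ℤ) := by exact_mod_cast hn2
    have hF2' : (2 : ℤ) ≤ (F : ℤ) := by exact_mod_cast hF2
    have hnFn : F + n ≤ n * F := by
      zify
      have key : (0:ℤ) ≤ ((n:ℤ) - 2) * ((F:ℤ) - 2) :=
        mul_nonneg (by linarith) (by linarith)
      have key2 : (n:ℤ) * F - 2 * n - 2 * F + 4 = ((n:ℤ) - 2) * ((F:ℤ) - 2) := by ring
      linarith
    have hMIcc : M ⊆ Finset.Icc n (n * F) := by
      intro x hx
      rw [hM, Finset.mem_image] at hx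
      obtain ⟨v, hv, hvx⟩ := hx
      have hv' := hUS v hv
      simp only [Finset.mem_Icc]
      omega
    have hMdisj : Disjoint M (n • G) := by
      rw [Finset.disjoint_left]
      intro x hxM hxG
      rw [hM, Finset.mem_image] at hxM
      obtain ⟨v, hv, hvx⟩ := hxM
      have hv' := hUS v hv
      have := hB' n x hxG v hv'.1 hv'.2.1 hv'.2.2
      omega
    have hsub2 : n • G ⊆ Finset.Icc n (n * F) \ M := by
      intro x hx
      rw [Finset.mem_sdiff]
      exact ⟨hsubIcc n hx, fun hxM => (Finset.disjoint_left.mp hMdisj hxM) hx⟩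
    have hMle : M.card ≤ n * F + 1 - n := by
      have := Finset.card_le_card hMIcc
      rwa [hIccCard] at this
    have hfinal : (n • G).card + U.card + n ≤ n * F + 1 := by
      have h1 := Finset.card_le_card hsub2
      rw [Finset.card_sdiff_of_subset hMIcc, hIccCard, hMcard] at h1
      omega
    -- now arithmetic in ℤ
    have h9 : (n • G).card + F + 1 + n ≤ n * F + 1 + G.card := by omega
    have h9' : ((n • G).card : ℤ) + F + 1 + n ≤ (n:ℤ) * F + 1 + G.card := by exact_mod_cast h9
    have hFc : (F : ℤ) + 1 = 2 * (G.card : ℤ) := by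
      have : F + 1 = 2 * G.card := by omega
      exact_mod_cast this
    have hg2' : (2 : ℤ) ≤ (G.card : ℤ) := by exact_mod_cast hg2
    have hh : (2 * (n:ℤ) - 1) * ((G.card : ℤ) - 1)
        = 2 * ((n:ℤ) * (G.card : ℤ)) - 2 * n - (G.card : ℤ) + 1 := by ring
    have hh2 : (n:ℤ) * ((F:ℤ)) = (n:ℤ) * (2 * (G.card:ℤ) - 1) := by rw [show (F:ℤ) = 2 * (G.card:ℤ) - 1 by linarith]
    have hh3 : (n:ℤ) * (2 * (G.card:ℤ) - 1) = 2 * ((n:ℤ) * (G.card : ℤ)) - n := by ring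
    linarith
end

section
/- For k ≥ 1, let m = 6k + 15 and let G = [1, m-1] ∪ {2m-7, 2m-5, 2m-2, 2m-1} ⊆ ℕ. Set A = (2m-1) - G = [0,1] ∪ {4,6} ∪ [m, 2(m-1)]. Then for all n ≥ 3, nA = ([0, 6n-4] ∪ {6n-2, 6n}) ∪ [m, 2n(m-1)]. -/
open Pointwise Finset

private lemma shape_sum (m c p q M c' p' q' M' : ℕ)
    (hm : 21 ≤ m) (hp : p = c + 2) (hq : q = c + 4) (hc : 14 ≤ c) (hcM : c + 4 ≤ M)
    (hmM : m ≤ M) (h2m : 2 * m ≤ M + 7)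
    (hc' : c' = c + 6) (hp' : p' = c + 8) (hq' : q' = c + 10) (hM' : M' = M + 2 * (m - 1)) :
    ((Finset.Icc 0 c ∪ {p, q}) ∪ Finset.Icc m M) +
      (Finset.Icc 0 1 ∪ {4, 6} ∪ Finset.Icc m (2 * (m - 1)))
      = (Finset.Icc 0 c' ∪ {p', q'}) ∪ Finset.Icc m M' := by
  subst hp hq hc' hp' hq' hM'
  ext x
  simp only [Finset.mem_add, mem_union, mem_Icc, mem_insert, mem_singleton]
  constructor
  · rintro ⟨a, ha, b, hb, rfl⟩
    omega
  · intro hx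
    have hx' : x ≤ c ∨ x = c + 1 ∨ x = c + 2 ∨ x = c + 3 ∨ x = c + 4 ∨ x = c + 5 ∨
        x = c + 6 ∨ x = c + 8 ∨ x = c + 10 ∨ (m ≤ x ∧ x ≤ M) ∨ x = M + 1 ∨
        (M + 1 < x ∧ x ≤ M + 4) ∨ (M + 4 < x ∧ x ≤ M + 6) ∨
        (M + 6 < x ∧ x ≤ 3 * m - 2) ∨ (3 * m - 2 < x ∧ x ≤ M + 2 * (m - 1)) := by omega
    rcases hx' with h|h|h|h|h|h|h|h|h|h|h|h|h|h|h
    · exact ⟨x, by omega, 0, by omega, by omega⟩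
    · exact ⟨c, by omega, 1, by omega, by omega⟩
    · exact ⟨c + 2, by omega, 0, by omega, by omega⟩
    · exact ⟨c + 2, by omega, 1, by omega, by omega⟩
    · exact ⟨c + 4, by omega, 0, by omega, by omega⟩
    · exact ⟨c + 4, by omega, 1, by omega, by omega⟩
    · exact ⟨c + 2, by omega, 4, by omega, by omega⟩
    · exact ⟨c + 2, by omega, 6, by omega, by omega⟩
    · exact ⟨c + 4, by omega, 6, by omega, by omega⟩
    · exact ⟨x, by omega, 0, by omega, by omega⟩
    · exact ⟨M, by omega, 1, by omega, by omega⟩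
    · exact ⟨x - 4, by omega, 4, by omega, by omega⟩
    · exact ⟨x - 6, by omega, 6, by omega, by omega⟩
    · exact ⟨m, by omega, x - m, by omega, by omega⟩
    · exact ⟨x - (2 * m - 2), by omega, 2 * m - 2, by omega, by omega⟩

private lemma BB_sum (m : ℕ) (hm : 21 ≤ m) :
    (Finset.Icc 0 1 ∪ {4, 6} ∪ Finset.Icc m (2 * (m - 1))) +
      (Finset.Icc 0 1 ∪ {4, 6} ∪ Finset.Icc m (2 * (m - 1)))
      = (Finset.Icc 0 2 ∪ Finset.Icc 4 8 ∪ {10, 12}) ∪ Finset.Icc m (4 * m - 4) := by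
  ext x
  simp only [Finset.mem_add, mem_union, mem_Icc, mem_insert, mem_singleton]
  constructor
  · rintro ⟨a, ha, b, hb, rfl⟩
    omega
  · intro hx
    have hx' : x ≤ 1 ∨ x = 2 ∨ x = 4 ∨ x = 5 ∨ x = 6 ∨ x = 7 ∨ x = 8 ∨ x = 10 ∨ x = 12 ∨
        (m ≤ x ∧ x ≤ 2 * m - 2) ∨ x = 2 * m - 1 ∨ (2 * m - 1 < x ∧ x ≤ 2 * m + 2) ∨
        (2 * m + 2 < x ∧ x ≤ 2 * m + 4) ∨ (2 * m + 4 < x ∧ x ≤ 3 * m - 2) ∨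
        (3 * m - 2 < x ∧ x ≤ 4 * m - 4) := by omega
    rcases hx' with h|h|h|h|h|h|h|h|h|h|h|h|h|h|h
    · exact ⟨x, by omega, 0, by omega, by omega⟩
    · exact ⟨1, by omega, 1, by omega, by omega⟩
    · exact ⟨4, by omega, 0, by omega, by omega⟩
    · exact ⟨4, by omega, 1, by omega, by omega⟩
    · exact ⟨6, by omega, 0, by omega, by omega⟩
    · exact ⟨6, by omega, 1, by omega, by omega⟩
    · exact ⟨4, by omega, 4, by omega, by omega⟩
    · exact ⟨4, by omega, 6, by omega, by omega⟩
    · exact ⟨6, by omega, 6, by omega, by omega⟩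
    · exact ⟨x, by omega, 0, by omega, by omega⟩
    · exact ⟨2 * m - 2, by omega, 1, by omega, by omega⟩
    · exact ⟨x - 4, by omega, 4, by omega, by omega⟩
    · exact ⟨x - 6, by omega, 6, by omega, by omega⟩
    · exact ⟨m, by omega, x - m, by omega, by omega⟩
    · exact ⟨x - (2 * m - 2), by omega, 2 * m - 2, by omega, by omega⟩

private lemma B2B_sum (m : ℕ) (hm : 21 ≤ m) :
    ((Finset.Icc 0 2 ∪ Finset.Icc 4 8 ∪ {10, 12}) ∪ Finset.Icc m (4 * m - 4)) +
      (Finset.Icc 0 1 ∪ {4, 6} ∪ Finset.Icc m (2 * (m - 1)))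
      = (Finset.Icc 0 14 ∪ {16, 18}) ∪ Finset.Icc m (6 * (m - 1)) := by
  ext x
  simp only [Finset.mem_add, mem_union, mem_Icc, mem_insert, mem_singleton]
  constructor
  · rintro ⟨a, ha, b, hb, rfl⟩
    omega
  · intro hx
    have hx' : x ≤ 2 ∨ x = 3 ∨ (4 ≤ x ∧ x ≤ 8) ∨ x = 9 ∨ x = 10 ∨ x = 11 ∨ x = 12 ∨
        x = 13 ∨ x = 14 ∨ x = 16 ∨ x = 18 ∨
        (m ≤ x ∧ x ≤ 4 * m - 4) ∨ x = 4 * m - 3 ∨ (4 * m - 3 < x ∧ x ≤ 4 * m) ∨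
        (4 * m < x ∧ x ≤ 4 * m + 2) ∨ (4 * m + 2 < x ∧ x ≤ 6 * (m - 1)) := by omega
    rcases hx' with h|h|h|h|h|h|h|h|h|h|h|h|h|h|h|h
    · exact ⟨x, by omega, 0, by omega, by omega⟩
    · exact ⟨2, by omega, 1, by omega, by omega⟩
    · exact ⟨x, by omega, 0, by omega, by omega⟩
    · exact ⟨8, by omega, 1, by omega, by omega⟩
    · exact ⟨10, by omega, 0, by omega, by omega⟩
    · exact ⟨10, by omega, 1, by omega, by omega⟩
    · exact ⟨12, by omega, 0, by omega, by omega⟩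
    · exact ⟨12, by omega, 1, by omega, by omega⟩
    · exact ⟨10, by omega, 4, by omega, by omega⟩
    · exact ⟨12, by omega, 4, by omega, by omega⟩
    · exact ⟨12, by omega, 6, by omega, by omega⟩
    · exact ⟨x, by omega, 0, by omega, by omega⟩
    · exact ⟨4 * m - 4, by omega, 1, by omega, by omega⟩
    · exact ⟨x - 4, by omega, 4, by omega, by omega⟩
    · exact ⟨x - 6, by omega, 6, by omega, by omega⟩
    · exact ⟨x - (2 * m - 2), by omega, 2 * m - 2, by omega, by omega⟩

theorem stmt12 (k : ℕ) (hk : 1 ≤ k) (m : ℕ) (hm : m = 6 * k + 15)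
    (G : Finset ℕ) (hG : G = Finset.Icc 1 (m - 1) ∪ {2 * m - 7, 2 * m - 5, 2 * m - 2, 2 * m - 1})
    (A : Finset ℕ) (hA : A = G.image (fun x => 2 * m - 1 - x)) :
    A = Finset.Icc 0 1 ∪ {4, 6} ∪ Finset.Icc m (2 * (m - 1)) ∧
    ∀ n : ℕ, 3 ≤ n →
      n • A = (Finset.Icc 0 (6 * n - 4) ∪ {6 * n - 2, 6 * n}) ∪
        Finset.Icc m (2 * n * (m - 1)) := by
  have hm21 : 21 ≤ m := by omega
  have hAeq : A = Finset.Icc 0 1 ∪ {4, 6} ∪ Finset.Icc m (2 * (m - 1)) := by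
    subst hA hG
    ext x
    simp only [Finset.mem_image, mem_union, mem_Icc, mem_insert, mem_singleton]
    constructor
    · rintro ⟨g, hg, rfl⟩
      omega
    · intro hx
      exact ⟨2 * m - 1 - x, by omega, by omega⟩
  refine ⟨hAeq, ?_⟩
  intro n hn
  induction n, hn using Nat.le_induction with
  | base =>
    rw [hAeq]
    show (2 + 1) • _ = _
    rw [succ_nsmul, two_nsmul, BB_sum m hm21, B2B_sum m hm21]
  | succ n hn ih =>
    rw [succ_nsmul, ih, hAeq]
    have key : 2 * 3 * (m - 1) ≤ 2 * n * (m - 1) :=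
      Nat.mul_le_mul_right (m - 1) (by omega)
    have h6 : 6 * n ≤ 2 * n * (m - 1) := by
      calc 6 * n = 2 * n * 3 := by ring
        _ ≤ 2 * n * (m - 1) := Nat.mul_le_mul_left (2 * n) (by omega)
    have hmm : m ≤ 2 * n * (m - 1) := le_trans (by omega) key
    have h2m : 2 * m ≤ 2 * n * (m - 1) + 7 :=
      le_trans (by omega) (Nat.add_le_add_right key 7)
    exact shape_sum m (6 * n - 4) (6 * n - 2) (6 * n) (2 * n * (m - 1))
      (6 * (n + 1) - 4) (6 * (n + 1) - 2) (6 * (n + 1)) (2 * (n + 1) * (m - 1))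
      hm21 (by omega) (by omega) (by omega)
      (by omega) hmm h2m (by omega) (by omega) (by omega) (by ring)
end

section
/- For k ≥ 1, let m = 6k+15 and G = [1, m-1] ∪ {2m-7, 2m-5, 2m-2, 2m-1}. Then β_G(2) = 1, β_G(n) = 2 for 3 ≤ n ≤ k+2, and β_G(n) = -6(n-k-3) for n ≥ k+3. Consequently the Buchweitz set {n ≥ 2 : β_G(n) ≥ 1} equals the interval [2, k+2]. -/
open Pointwise

def H13 (m n : ℕ) : Finset ℕ :=
  if n = 2 then {2*(n*m) - 7*n + 1, 2*(n*m) - 7*n + 3, 2*(n*m) - 7*n + 9}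
  else {2*(n*m) - 7*n + 1, 2*(n*m) - 7*n + 3}

def S13 (m n : ℕ) : Finset ℕ :=
  Finset.Icc n (2*(n*m) - n - m) ∪
  ((Finset.Icc (2*(n*m) - 7*n) (2*(n*m) - n)) \ H13 m n)

lemma mem_S13 (m n x : ℕ) : x ∈ S13 m n ↔
    (n ≤ x ∧ x ≤ 2*(n*m) - n - m) ∨
    ((2*(n*m) - 7*n ≤ x ∧ x ≤ 2*(n*m) - n) ∧
      x ≠ 2*(n*m) - 7*n + 1 ∧ x ≠ 2*(n*m) - 7*n + 3 ∧ (n = 2 → x ≠ 2*(n*m) - 7*n + 9)) := by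
  unfold S13 H13
  by_cases h : n = 2 <;>
    simp [h, Finset.mem_union, Finset.mem_sdiff, Finset.mem_Icc, Finset.mem_insert]

lemma memG13 (m : ℕ) (G : Finset ℕ)
    (hG : G = Finset.Icc 1 (m - 1) ∪ {2 * m - 7, 2 * m - 5, 2 * m - 2, 2 * m - 1}) (z : ℕ) :
    z ∈ G ↔ (1 ≤ z ∧ z ≤ m - 1) ∨ z = 2*m-7 ∨ z = 2*m-5 ∨ z = 2*m-2 ∨ z = 2*m-1 := by
  subst hG; simp [Finset.mem_union, Finset.mem_Icc, Finset.mem_insert]; tauto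

lemma cardG13 (m : ℕ) (hm21 : 21 ≤ m) (G : Finset ℕ)
    (hG : G = Finset.Icc 1 (m - 1) ∪ {2 * m - 7, 2 * m - 5, 2 * m - 2, 2 * m - 1}) :
    G.card = m + 3 := by
  subst hG
  rw [Finset.card_union_of_disjoint]
  · have h4 : ({2*m-7, 2*m-5, 2*m-2, 2*m-1} : Finset ℕ).card = 4 := by
      rw [Finset.card_insert_of_notMem (by simp; omega),
          Finset.card_insert_of_notMem (by simp; omega),
          Finset.card_insert_of_notMem (by simp; omega), Finset.card_singleton]
    rw [h4, Nat.card_Icc]; omega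
  · rw [Finset.disjoint_left]
    intro a ha hb
    simp [Finset.mem_Icc] at ha
    simp [Finset.mem_insert] at hb
    omega

lemma up13 (m : ℕ) (hm21 : 21 ≤ m) (G : Finset ℕ)
    (hG : G = Finset.Icc 1 (m - 1) ∪ {2 * m - 7, 2 * m - 5, 2 * m - 2, 2 * m - 1}) :
    ∀ n : ℕ, 2 ≤ n → n • G ⊆ S13 m n := by
  intro n hn
  induction n, hn using Nat.le_induction with
  | base =>
    intro x hx
    rw [two_nsmul, Finset.mem_add] at hx
    obtain ⟨y, hy, z, hz, rfl⟩ := hx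
    rw [memG13 m G hG] at hy hz
    rw [mem_S13]
    omega
  | succ n hn ih =>
    intro x hx
    rw [succ_nsmul, Finset.mem_add] at hx
    obtain ⟨y, hy, z, hz, rfl⟩ := hx
    have hy' := ih hy
    rw [memG13 m G hG] at hz
    rw [mem_S13 m n] at hy'
    rw [mem_S13, show (n+1)*m = n*m + m from by ring]
    have f1 : n*21 ≤ n*m := Nat.mul_le_mul_left n hm21
    have f2 : 2*m ≤ n*m := Nat.mul_le_mul_right m hn
    obtain ⟨p, hp⟩ : ∃ p, n*m = p := ⟨_, rfl⟩
    simp only [hp] at f1 f2 hy' ⊢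
    omega

lemma down13 (m : ℕ) (hm21 : 21 ≤ m) (G : Finset ℕ)
    (hG : G = Finset.Icc 1 (m - 1) ∪ {2 * m - 7, 2 * m - 5, 2 * m - 2, 2 * m - 1}) :
    ∀ n : ℕ, 2 ≤ n → S13 m n ⊆ n • G := by
  have gm : ∀ z : ℕ, ((1 ≤ z ∧ z ≤ m - 1) ∨ z = 2*m-7 ∨ z = 2*m-5 ∨ z = 2*m-2 ∨ z = 2*m-1) → z ∈ G :=
    fun z h => (memG13 m G hG z).2 h
  intro n hn
  induction n, hn using Nat.le_induction with
  | base =>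
    intro x hx
    rw [mem_S13] at hx
    rw [two_nsmul, Finset.mem_add]
    rcases hx with ⟨h1, h2⟩ | ⟨⟨h1, h2⟩, h3, h4, h5⟩
    · rcases (by omega : x ≤ m ∨ (m+1 ≤ x ∧ x ≤ 2*m-2) ∨ (2*m-1 ≤ x ∧ x ≤ 3*m-3) ∨ x = 3*m-2) with
        h | h | h | h
      · exact ⟨1, gm 1 (by omega), x - 1, gm _ (by omega), by omega⟩
      · exact ⟨m-1, gm _ (by omega), x - (m-1), gm _ (by omega), by omega⟩
      · exact ⟨2*m-2, gm _ (by omega), x - (2*m-2), gm _ (by omega), by omega⟩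
      · exact ⟨2*m-1, gm _ (by omega), m-1, gm _ (by omega), by omega⟩
    · rcases (by omega : x = 4*m-14 ∨ x = 4*m-12 ∨ x = 4*m-10 ∨ x = 4*m-9 ∨ x = 4*m-8 ∨
          x = 4*m-7 ∨ x = 4*m-6 ∨ x = 4*m-4 ∨ x = 4*m-3 ∨ x = 4*m-2) with
        h | h | h | h | h | h | h | h | h | h
      · exact ⟨2*m-7, gm _ (by omega), 2*m-7, gm _ (by omega), by omega⟩
      · exact ⟨2*m-7, gm _ (by omega), 2*m-5, gm _ (by omega), by omega⟩
      · exact ⟨2*m-5, gm _ (by omega), 2*m-5, gm _ (by omega), by omega⟩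
      · exact ⟨2*m-7, gm _ (by omega), 2*m-2, gm _ (by omega), by omega⟩
      · exact ⟨2*m-7, gm _ (by omega), 2*m-1, gm _ (by omega), by omega⟩
      · exact ⟨2*m-5, gm _ (by omega), 2*m-2, gm _ (by omega), by omega⟩
      · exact ⟨2*m-5, gm _ (by omega), 2*m-1, gm _ (by omega), by omega⟩
      · exact ⟨2*m-2, gm _ (by omega), 2*m-2, gm _ (by omega), by omega⟩
      · exact ⟨2*m-2, gm _ (by omega), 2*m-1, gm _ (by omega), by omega⟩
      · exact ⟨2*m-1, gm _ (by omega), 2*m-1, gm _ (by omega), by omega⟩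
  | succ n hn ih =>
    intro x hx
    rw [mem_S13, show (n+1)*m = n*m + m from by ring] at hx
    rw [succ_nsmul, Finset.mem_add]
    have f1 : n*21 ≤ n*m := Nat.mul_le_mul_left n hm21
    have f2 : 2*m ≤ n*m := Nat.mul_le_mul_right m hn
    obtain ⟨p, hp⟩ : ∃ p, n*m = p := ⟨_, rfl⟩
    have hzmem : ∀ z : ℕ, ((n ≤ z ∧ z ≤ 2*p - n - m) ∨
        ((2*p - 7*n ≤ z ∧ z ≤ 2*p - n) ∧
          z ≠ 2*p - 7*n + 1 ∧ z ≠ 2*p - 7*n + 3 ∧ (n = 2 → z ≠ 2*p - 7*n + 9))) →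
        z ∈ n • G := by
      intro z hz
      exact ih ((mem_S13 m n z).2 (by simp only [hp]; exact hz))
    simp only [hp] at hx f1 f2
    rcases hx with ⟨h1, h2⟩ | ⟨⟨h1, h2⟩, h3, h4, h5⟩
    · rcases (by omega : x ≤ n + m - 1 ∨ (n + m ≤ x ∧ x ≤ 2*p - n - 1) ∨ 2*p - n ≤ x) with h | h | h
      · exact ⟨n, hzmem n (by omega), x - n, gm _ (by omega), by omega⟩
      · exact ⟨x - (m-1), hzmem _ (by omega), m-1, gm _ (by omega), by omega⟩
      · exact ⟨x - (2*m-1), hzmem _ (by omega), 2*m-1, gm _ (by omega), by omega⟩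
    · rcases (by omega :
          (x ≤ 2*p + 2*m - 7*n - 7 + 6*n ∧ ¬(n = 2 ∧ x = 2*p + 2*m - 7*n - 7 + 9)) ∨
          (n = 2 ∧ x = 2*p + 2*m - 7*n - 7 + 9) ∨
          x = 2*p + 2*m - 7*n - 7 + 6*n + 1 ∨ x = 2*p + 2*m - 7*n - 7 + 6*n + 2 ∨
          x = 2*p + 2*m - 7*n - 7 + 6*n + 3 ∨ x = 2*p + 2*m - 7*n - 7 + 6*n + 4 ∨
          x = 2*p + 2*m - 7*n - 7 + 6*n + 5 ∨ x = 2*p + 2*m - 7*n - 7 + 6*n + 6) with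
        h | h | h | h | h | h | h | h
      · exact ⟨x - (2*m-7), hzmem _ (by omega), 2*m-7, gm _ (by omega), by omega⟩
      · exact ⟨x - (2*m-2), hzmem _ (by omega), 2*m-2, gm _ (by omega), by omega⟩
      · exact ⟨x - (2*m-1), hzmem _ (by omega), 2*m-1, gm _ (by omega), by omega⟩
      · exact ⟨x - (2*m-5), hzmem _ (by omega), 2*m-5, gm _ (by omega), by omega⟩
      · exact ⟨x - (2*m-2), hzmem _ (by omega), 2*m-2, gm _ (by omega), by omega⟩
      · exact ⟨x - (2*m-1), hzmem _ (by omega), 2*m-1, gm _ (by omega), by omega⟩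
      · exact ⟨x - (2*m-2), hzmem _ (by omega), 2*m-2, gm _ (by omega), by omega⟩
      · exact ⟨x - (2*m-1), hzmem _ (by omega), 2*m-1, gm _ (by omega), by omega⟩

lemma cardS13_mid (m n : ℕ) (hm21 : 21 ≤ m) (hn : 2 ≤ n) (h6 : 6*n + 3 ≤ m) :
    (S13 m n).card + (if n = 2 then 1 else 0) = 2*(n*m) + 4*n - m := by
  have f1 : n*21 ≤ n*m := Nat.mul_le_mul_left n hm21
  have f2 : 2*m ≤ n*m := Nat.mul_le_mul_right m hn
  have f3 : n*(6*n+3) ≤ n*m := Nat.mul_le_mul_left n h6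
  have hHsub : H13 m n ⊆ Finset.Icc (2*(n*m) - 7*n) (2*(n*m) - n) := by
    unfold H13
    split_ifs with h2 <;> intro y hy <;> simp only [Finset.mem_insert, Finset.mem_singleton] at hy <;>
      rw [Finset.mem_Icc] <;> omega
  have hHcard : (H13 m n).card = if n = 2 then 3 else 2 := by
    unfold H13
    split_ifs with h2
    · exact Finset.card_eq_three.2 ⟨_, _, _, by omega, by omega, by omega, rfl⟩
    · exact Finset.card_eq_two.2 ⟨_, _, by omega, rfl⟩
  unfold S13
  rw [Finset.card_union_of_disjoint, Finset.card_sdiff_of_subset hHsub, hHcard, Nat.card_Icc, Nat.card_Icc]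
  · split_ifs <;> omega
  · rw [Finset.disjoint_left]
    intro a ha hb
    rw [Finset.mem_Icc] at ha
    rw [Finset.mem_sdiff, Finset.mem_Icc] at hb
    omega

lemma cardS13_hi (m n : ℕ) (hm21 : 21 ≤ m) (hn : 2 ≤ n) (h6 : m + 3 ≤ 6*n) :
    (S13 m n).card = 2*(n*m) - 2*n + 1 := by
  have f1 : n*21 ≤ n*m := Nat.mul_le_mul_left n hm21
  have f2 : 2*m ≤ n*m := Nat.mul_le_mul_right m hn
  obtain ⟨p, hp⟩ : ∃ p, n*m = p := ⟨_, rfl⟩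
  have : S13 m n = Finset.Icc n (2*(n*m) - n) := by
    apply Finset.ext
    intro x
    rw [mem_S13, Finset.mem_Icc]
    simp only [hp] at f1 f2 ⊢
    omega
  rw [this, Nat.card_Icc]
  simp only [hp] at f1 f2 ⊢
  omega

theorem stmt13 (k : ℕ) (hk : 1 ≤ k) (m : ℕ) (hm : m = 6 * k + 15)
    (G : Finset ℕ) (hG : G = Finset.Icc 1 (m - 1) ∪ {2 * m - 7, 2 * m - 5, 2 * m - 2, 2 * m - 1})
    (β : ℕ → ℤ) (hβ : ∀ n : ℕ, β n = ((n • G).card : ℤ) - (2 * n - 1) * ((G.card : ℤ) - 1)) :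
    β 2 = 1 ∧
    (∀ n : ℕ, 3 ≤ n → n ≤ k + 2 → β n = 2) ∧
    (∀ n : ℕ, k + 3 ≤ n → β n = -6 * ((n : ℤ) - k - 3)) ∧
    {n : ℕ | 2 ≤ n ∧ 1 ≤ β n} = Set.Icc 2 (k + 2) := by
  have hm21 : 21 ≤ m := by omega
  have hEq : ∀ n : ℕ, 2 ≤ n → n • G = S13 m n := fun n hn =>
    Finset.Subset.antisymm (up13 m hm21 G hG n hn) (down13 m hm21 G hG n hn)
  have hGc := cardG13 m hm21 G hG
  have part1 : β 2 = 1 := by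
    have hc : (S13 m 2).card = 3*m + 7 := by
      have := cardS13_mid m 2 hm21 le_rfl (by omega)
      rw [if_pos rfl] at this
      omega
    rw [hβ 2, hEq 2 le_rfl, hGc, hc]
    push_cast
    ring
  have part2 : ∀ n : ℕ, 3 ≤ n → n ≤ k + 2 → β n = 2 := by
    intro n h3 hk2
    have hn2 : 2 ≤ n := by omega
    have f2 : 2*m ≤ n*m := Nat.mul_le_mul_right m hn2
    have hc : (S13 m n).card = 2*(n*m) + 4*n - m := by
      have := cardS13_mid m n hm21 hn2 (by omega)
      rw [if_neg (by omega)] at this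
      omega
    have hle : m ≤ 2*(n*m) + 4*n := by omega
    rw [hβ n, hEq n hn2, hGc, hc, Nat.cast_sub hle]
    push_cast
    ring
  have part3 : ∀ n : ℕ, k + 3 ≤ n → β n = -6 * ((n : ℤ) - k - 3) := by
    intro n hk3
    have hn2 : 2 ≤ n := by omega
    have f1 : n*21 ≤ n*m := Nat.mul_le_mul_left n hm21
    have hc : (S13 m n).card = 2*(n*m) - 2*n + 1 := cardS13_hi m n hm21 hn2 (by omega)
    have h2n : 2*n ≤ 2*(n*m) := by omega
    rw [hβ n, hEq n hn2, hGc, hc, Nat.cast_add, Nat.cast_sub h2n, hm]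
    push_cast
    ring
  refine ⟨part1, part2, part3, ?_⟩
  ext n
  simp only [Set.mem_setOf_eq, Set.mem_Icc]
  constructor
  · rintro ⟨h2, h1⟩
    refine ⟨h2, ?_⟩
    by_contra hcon
    have h3 := part3 n (by omega)
    rw [h3] at h1
    omega
  · rintro ⟨h2, hk2⟩
    refine ⟨h2, ?_⟩
    by_cases hn2 : n = 2
    · rw [hn2, part1]
    · rw [part2 n (by omega) hk2]
      norm_num
end

section
/- For every integer b ≥ 3, there exists a numerical semigroup S ⊆ ℕ whose Buchweitz set B(S) = {n ≥ 2 : |nG| > (2n-1)(|G|-1)}, where G = ℕ \ S, equals the integer interval [2, b]. In particular, the cardinality of B(S) is unbounded as S varies over numerical semigroups. -/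
open Pointwise

namespace Stmt14Aux

def F : Finset ℕ := {1, 2, 5, 7}

def G (m : ℕ) : Finset ℕ := Finset.Icc 1 (m-1) ∪ {2*m-7, 2*m-5, 2*m-2, 2*m-1}

lemma mem_G {m x : ℕ} :
    x ∈ G m ↔ (1 ≤ x ∧ x ≤ m - 1) ∨ x = 2*m-7 ∨ x = 2*m-5 ∨ x = 2*m-2 ∨ x = 2*m-1 := by
  simp [G, Finset.mem_union, Finset.mem_Icc, Finset.mem_insert, Finset.mem_singleton]
  tauto

lemma card_G {m : ℕ} (hm : 21 ≤ m) : (G m).card = m + 3 := by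
  have h : (({2*m-7, 2*m-5, 2*m-2, 2*m-1} : Finset ℕ)).card = 4 := by
    rw [show ({2*m-7, 2*m-5, 2*m-2, 2*m-1} : Finset ℕ)
      = insert (2*m-7) (insert (2*m-5) (insert (2*m-2) {2*m-1})) from rfl]
    rw [Finset.card_insert_of_notMem (by simp; omega),
        Finset.card_insert_of_notMem (by simp; omega),
        Finset.card_insert_of_notMem (by simp; omega), Finset.card_singleton]
  have hd : Disjoint (Finset.Icc 1 (m-1)) ({2*m-7, 2*m-5, 2*m-2, 2*m-1} : Finset ℕ) := by
    rw [Finset.disjoint_left]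
    intro a ha hb
    simp [Finset.mem_Icc] at ha
    simp [Finset.mem_insert] at hb
    omega
  rw [G, Finset.card_union_of_disjoint hd, h, Nat.card_Icc]
  omega

lemma add_mem_smul {i j : ℕ} {A : Finset ℕ} {x y : ℕ} (hx : x ∈ i • A) (hy : y ∈ j • A) :
    x + y ∈ (i + j) • A := by
  rw [add_nsmul]; exact Finset.add_mem_add hx hy

lemma mul_mem_smul {f : ℕ} (j : ℕ) {A : Finset ℕ} (hf : f ∈ A) : j * f ∈ j • A := by
  induction j with
  | zero => simp
  | succ k ih =>
      rw [succ_nsmul]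
      have : (k+1) * f = k * f + f := by ring
      rw [this]
      exact Finset.add_mem_add ih hf

lemma rep (c a o u : ℕ) : 7*c + 5*a + 2*o + u ∈ (c+a+o+u) • F := by
  have h7 : 7*c = c*7 := by ring
  have h5 : 5*a = a*5 := by ring
  have h2 : 2*o = o*2 := by ring
  have m7 : 7*c ∈ c • F := by rw [h7]; exact mul_mem_smul c (by decide)
  have m5 : 5*a ∈ a • F := by rw [h5]; exact mul_mem_smul a (by decide)
  have m2 : 2*o ∈ o • F := by rw [h2]; exact mul_mem_smul o (by decide)
  have m1 : u ∈ u • F := by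
    have := mul_mem_smul u (show (1:ℕ) ∈ F by decide)
    rwa [Nat.mul_one] at this
  exact add_mem_smul (add_mem_smul (add_mem_smul m7 m5) m2) m1

lemma rep' {n d : ℕ} (h2 : 2 ≤ n) (hd1 : n ≤ d) (hd2 : d ≤ 7*n)
    (h3 : d ≠ n+3) (h4 : d ≠ 7*n-3) (h5 : d ≠ 7*n-1) : d ∈ n • F := by
  obtain ⟨q, r, hqr, hr⟩ : ∃ q r, d - n = 6*q + r ∧ r < 6 :=
    ⟨(d-n)/6, (d-n)%6, by omega, by omega⟩
  have key : ∃ c a o, c + a + o ≤ n ∧ 7*c + 5*a + 2*o + (n - (c+a+o)) = d := by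
    interval_cases r
    · exact ⟨q, 0, 0, by omega, by omega⟩
    · exact ⟨q, 0, 1, by omega, by omega⟩
    · rcases Nat.eq_zero_or_pos q with h|h
      · exact ⟨0, 0, 2, by omega, by omega⟩
      · exact ⟨q-1, 2, 0, by omega, by omega⟩
    · rcases Nat.eq_zero_or_pos q with h|h
      · exact (h3 (by omega)).elim
      · exact ⟨q-1, 2, 1, by omega, by omega⟩
    · exact ⟨q, 1, 0, by omega, by omega⟩
    · exact ⟨q, 1, 1, by omega, by omega⟩
  obtain ⟨c, a, o, hle, heq⟩ := key
  have h := rep c a o (n - (c+a+o))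
  rw [show c+a+o+(n-(c+a+o)) = n from by omega] at h
  rwa [heq] at h

lemma mirror {m : ℕ} (hm : 21 ≤ m) :
    ∀ k x, x ∈ k • F → ∃ y ∈ k • G m, y + x = 2*m*k := by
  intro k
  induction k with
  | zero =>
      intro x hx
      simp at hx
      exact ⟨0, by simp, by omega⟩
  | succ k ih =>
      intro x hx
      rw [succ_nsmul, Finset.mem_add] at hx
      obtain ⟨x', hx', f, hf, hxf⟩ := hx
      obtain ⟨y', hy', hsum⟩ := ih x' hx'
      have hfG : (2*m - f) ∈ G m := by
        simp [F] at hf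
        rw [mem_G]
        rcases hf with h|h|h|h <;> omega
      refine ⟨y' + (2*m - f), ?_, ?_⟩
      · rw [succ_nsmul]; exact Finset.add_mem_add hy' hfG
      · simp [F] at hf
        have : f ≤ 2*m := by rcases hf with h|h|h|h <;> omega
        have hmk : 2*m*(k+1) = 2*m*k + 2*m := by ring
        omega

lemma bounds {m : ℕ} (hm : 21 ≤ m) :
    ∀ k x, x ∈ k • G m → k ≤ x ∧ x ≤ k * (2*m-1) := by
  intro k
  induction k with
  | zero => intro x hx; simp at hx; omega
  | succ k ih =>
      intro x hx
      rw [succ_nsmul, Finset.mem_add] at hx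
      obtain ⟨y, hy, g, hg, hyg⟩ := hx
      obtain ⟨h1, h2⟩ := ih y hy
      rw [mem_G] at hg
      have hk : (k+1) * (2*m-1) = k * (2*m-1) + (2*m-1) := by ring
      omega

lemma big {m : ℕ} (hm : 21 ≤ m) :
    ∀ k, 2 ≤ k → ∀ x, k ≤ x → x + m + k ≤ 2*m*k → x ∈ k • G m := by
  intro k hk
  induction k, hk using Nat.le_induction with
  | base =>
      intro x hx1 hx2
      have h2 : (2:ℕ) • G m = G m + G m := two_nsmul (G m)
      rw [h2, Finset.mem_add]
      rcases Nat.lt_or_ge x (m+1) with h | h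
      · exact ⟨1, by rw [mem_G]; omega, x - 1, by rw [mem_G]; omega, by omega⟩
      · rcases Nat.lt_or_ge x (2*m-1) with h' | h'
        · exact ⟨m-1, by rw [mem_G]; omega, x - (m-1), by rw [mem_G]; omega, by omega⟩
        · rcases Nat.lt_or_ge x (3*m-2) with h'' | h''
          · exact ⟨2*m-2, by rw [mem_G]; omega, x - (2*m-2), by rw [mem_G]; omega, by omega⟩
          · exact ⟨2*m-1, by rw [mem_G]; omega, m-1, by rw [mem_G]; omega, by omega⟩
  | succ k hk ih =>
      intro x hx1 hx2
      have hK : 2*m*(k+1) = 2*m*k + 2*m := by ring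
      have hK1 : 4*m ≤ 2*m*k := by nlinarith
      have hK2 : 42*k ≤ 2*m*k := by nlinarith
      rw [succ_nsmul, Finset.mem_add]
      rcases Nat.lt_or_ge (x + k + 1) (2*m*k + 1) with hA | hB
      · rcases Nat.lt_or_ge x (k + m) with h1 | h2
        · refine ⟨k, ih k le_rfl (by omega), x - k, ?_, by omega⟩
          rw [mem_G]; omega
        · refine ⟨x - (m-1), ih _ (by omega) (by omega), m-1, ?_, by omega⟩
          rw [mem_G]; omega
      · refine ⟨x - (2*m-1), ih _ (by omega) (by omega), 2*m-1, ?_, by omega⟩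
        rw [mem_G]; omega

end Stmt14Aux

theorem stmt14 (b : ℕ) (hb : 3 ≤ b) :
    ∃ S : Set ℕ, (0 : ℕ) ∈ S ∧ (∀ a ∈ S, ∀ c ∈ S, a + c ∈ S) ∧
      ∃ hfin : Sᶜ.Finite,
        {n : ℕ | 2 ≤ n ∧
            (2 * n - 1) * ((hfin.toFinset.card : ℤ) - 1) < ((n • hfin.toFinset).card : ℤ)} =
          Set.Icc 2 b := by
  set m := 6*b + 3 with hm_def
  have hm : 21 ≤ m := by omega
  have hfin : (((↑(Stmt14Aux.G m) : Set ℕ)ᶜ)ᶜ).Finite := by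
    rw [compl_compl]; exact (Stmt14Aux.G m).finite_toSet
  refine ⟨(↑(Stmt14Aux.G m) : Set ℕ)ᶜ, ?_, ?_, hfin, ?_⟩
  · simp only [Set.mem_compl_iff, Finset.mem_coe, Stmt14Aux.mem_G]
    omega
  · intro a ha c hc
    simp only [Set.mem_compl_iff, Finset.mem_coe, Stmt14Aux.mem_G] at *
    omega
  · have hT : hfin.toFinset = Stmt14Aux.G m := by
      ext x; simp [Set.Finite.mem_toFinset]
    rw [hT]
    ext n
    simp only [Set.mem_setOf_eq, Set.mem_Icc]
    rw [Stmt14Aux.card_G hm]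
    constructor
    · rintro ⟨h2, hlt⟩
      refine ⟨h2, ?_⟩
      by_contra hnb
      push_neg at hnb
      have hsub : n • Stmt14Aux.G m ⊆ Finset.Icc n (n*(2*m-1)) := by
        intro x hx
        have := Stmt14Aux.bounds hm n x hx
        rw [Finset.mem_Icc]; exact this
      have hmono : n*1 ≤ n*(2*m-1) := Nat.mul_le_mul_left _ (by omega)
      have hexp : n*(2*m-1) + n*1 = n*(2*m-1+1) := (Nat.mul_add n _ _).symm
      have hexp2 : n*(2*m-1+1) = 2*m*n := by rw [show 2*m-1+1 = 2*m from by omega]; ring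
      have hcard : (n • Stmt14Aux.G m).card + 2*n ≤ 2*m*n + 1 := by
        have := Finset.card_le_card hsub
        rw [Nat.card_Icc] at this
        omega
      have hcz : ((n • Stmt14Aux.G m).card : ℤ) + 2*n ≤ 2*(m:ℤ)*n + 1 := by
        exact_mod_cast hcard
      have hmz : (m:ℤ) = 6*(b:ℤ) + 3 := by exact_mod_cast hm_def
      have hnz : (b:ℤ) + 1 ≤ (n:ℤ) := by exact_mod_cast hnb
      push_cast at hlt
      nlinarith [hlt, hcz]
    · rintro ⟨h2, hnb⟩
      have hmn : 6*n + 3 ≤ m := by omega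
      obtain ⟨K, hK⟩ : ∃ K, K = 2*m*n := ⟨_, rfl⟩
      have h7n : 7*n + m + n ≤ K := by
        have e1 : 2*m*2 ≤ 2*m*n := Nat.mul_le_mul_left (2*m) h2
        rw [← hK] at e1
        omega
      -- the big interval
      have hsubA : Finset.Icc n (K - m - n) ⊆ n • Stmt14Aux.G m := by
        intro x hx
        rw [Finset.mem_Icc] at hx
        refine Stmt14Aux.big hm n h2 x hx.1 ?_
        rw [← hK]
        omega
      have hsubB : (Finset.Icc n (7*n) \ {n+3, 7*n-3, 7*n-1}).image (fun d => K - d)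
          ⊆ n • Stmt14Aux.G m := by
        intro x hx
        simp only [Finset.mem_image, Finset.mem_sdiff, Finset.mem_Icc, Finset.mem_insert,
          Finset.mem_singleton] at hx
        obtain ⟨d, ⟨⟨hd1, hd2⟩, hd3⟩, rfl⟩ := hx
        push_neg at hd3
        have hrep : d ∈ n • Stmt14Aux.F :=
          Stmt14Aux.rep' h2 hd1 hd2 hd3.1 hd3.2.1 hd3.2.2
        obtain ⟨y, hy, hsum⟩ := Stmt14Aux.mirror hm n d hrep
        rw [← hK] at hsum
        have : K - d = y := by omega
        exact this ▸ hy
      have hdisj : Disjoint (Finset.Icc n (K - m - n))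
          ((Finset.Icc n (7*n) \ {n+3, 7*n-3, 7*n-1}).image (fun d => K - d)) := by
        rw [Finset.disjoint_left]
        intro x hx hx'
        rw [Finset.mem_Icc] at hx
        simp only [Finset.mem_image, Finset.mem_sdiff, Finset.mem_Icc, Finset.mem_insert,
          Finset.mem_singleton] at hx'
        obtain ⟨d, ⟨⟨hd1, hd2⟩, _⟩, hdx⟩ := hx'
        omega
      have hcardA : (Finset.Icc n (K - m - n)).card + m + 2*n = K + 1 := by
        rw [Nat.card_Icc]; omega
      have hcardB : ((Finset.Icc n (7*n) \ {n+3, 7*n-3, 7*n-1}).image (fun d => K - d)).card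
          = 6*n - 2 := by
        rw [Finset.card_image_of_injOn]
        · rw [Finset.card_sdiff_of_subset]
          · have h3 : ({n+3, 7*n-3, 7*n-1} : Finset ℕ).card = 3 := by
              rw [show ({n+3, 7*n-3, 7*n-1} : Finset ℕ)
                = insert (n+3) (insert (7*n-3) {7*n-1}) from rfl]
              rw [Finset.card_insert_of_notMem (by simp; omega),
                  Finset.card_insert_of_notMem (by simp; omega), Finset.card_singleton]
            rw [h3, Nat.card_Icc]
            omega
          · intro x hx
            simp only [Finset.mem_insert, Finset.mem_singleton] at hx
            rw [Finset.mem_Icc]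
            omega
        · intro d hd d' hd' hdd
          simp only [Finset.coe_sdiff, Set.mem_diff, Finset.mem_coe, Finset.mem_Icc] at hd hd'
          simp only at hdd
          omega
      have hle := Finset.card_le_card (Finset.union_subset hsubA hsubB)
      rw [Finset.card_union_of_disjoint hdisj] at hle
      have hfinal : K + 4*n ≤ (n • Stmt14Aux.G m).card + m + 1 := by
        omega
      refine ⟨h2, ?_⟩
      have hKz : (K:ℤ) = 2*(m:ℤ)*(n:ℤ) := by exact_mod_cast hK
      have hfz : (K:ℤ) + 4*n ≤ ((n • Stmt14Aux.G m).card : ℤ) + m + 1 := by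
        exact_mod_cast hfinal
      push_cast
      nlinarith [hfz, hKz]
end

section
/- For k ≥ 1, let m = 6k+19 and let G = [1, m-1] ∪ {2m-7, 2m-6, 2m-2, 2m-1}, the gapset of a numerical semigroup S. Then the Buchweitz set {n ≥ 2 : |nG| > (2n-1)(|G|-1)} equals the interval [3, k+3]; more precisely β_G(2) = 0, β_G(3) = 1, β_G(n) = 4 for 4 ≤ n ≤ k+3, and β_G(n) = 6k - 6n + 22 for n ≥ k+4. -/
open Pointwise

theorem stmt15 (k : ℕ) (hk : 1 ≤ k) (m : ℕ) (hm : m = 6 * k + 19)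
    (G : Finset ℕ) (hG : G = Finset.Icc 1 (m - 1) ∪ {2 * m - 7, 2 * m - 6, 2 * m - 2, 2 * m - 1})
    (β : ℕ → ℤ) (hβ : ∀ n : ℕ, β n = ((n • G).card : ℤ) - (2 * n - 1) * ((G.card : ℤ) - 1)) :
    β 2 = 0 ∧ β 3 = 1 ∧
    (∀ n : ℕ, 4 ≤ n → n ≤ k + 3 → β n = 4) ∧
    (∀ n : ℕ, k + 4 ≤ n → β n = 6 * (k : ℤ) - 6 * n + 22) ∧
    {n : ℕ | 2 ≤ n ∧ 1 ≤ β n} = Set.Icc 3 (k + 3) := by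
  subst hm
  have hGm : ∀ g : ℕ, g ∈ G ↔ (1 ≤ g ∧ g ≤ 6*k+18) ∨ g = 12*k+31 ∨ g = 12*k+32 ∨ g = 12*k+36 ∨ g = 12*k+37 := by
    intro g
    rw [hG]
    simp only [Finset.mem_union, Finset.mem_Icc, Finset.mem_insert, Finset.mem_singleton]
    omega
  -- 2G characterization
  have h2 : ∀ x : ℕ, x ∈ 2 • G ↔ (2 ≤ x ∧ x ≤ 18*k+55) ∨ x = 24*k+62 ∨ x = 24*k+63 ∨ x = 24*k+64 ∨ x = 24*k+67 ∨ x = 24*k+68 ∨ x = 24*k+69 ∨ x = 24*k+72 ∨ x = 24*k+73 ∨ x = 24*k+74 := by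
    intro x
    rw [two_nsmul, Finset.mem_add]
    constructor
    · rintro ⟨b, hb, c, hc, rfl⟩
      have h1 := (hGm b).mp hb
      have h2 := (hGm c).mp hc
      omega
    · rintro (⟨hx1, hx2⟩ | rfl | rfl | rfl | rfl | rfl | rfl | rfl | rfl | rfl)
      · by_cases c1 : x ≤ 6*k+19
        · exact ⟨x - 1, (hGm _).mpr (by omega), 1, (hGm _).mpr (by omega), by omega⟩
        by_cases c2 : x ≤ 12*k+36
        · exact ⟨6*k+18, (hGm _).mpr (by omega), x - (6*k+18), (hGm _).mpr (by omega), by omega⟩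
        by_cases c3 : x ≤ 18*k+54
        · exact ⟨x - (12*k+36), (hGm _).mpr (by omega), 12*k+36, (hGm _).mpr (by omega), by omega⟩
        · exact ⟨6*k+18, (hGm _).mpr (by omega), 12*k+37, (hGm _).mpr (by omega), by omega⟩
      · exact ⟨12*k+31, (hGm _).mpr (by omega), 12*k+31, (hGm _).mpr (by omega), by omega⟩
      · exact ⟨12*k+31, (hGm _).mpr (by omega), 12*k+32, (hGm _).mpr (by omega), by omega⟩
      · exact ⟨12*k+32, (hGm _).mpr (by omega), 12*k+32, (hGm _).mpr (by omega), by omega⟩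
      · exact ⟨12*k+31, (hGm _).mpr (by omega), 12*k+36, (hGm _).mpr (by omega), by omega⟩
      · exact ⟨12*k+31, (hGm _).mpr (by omega), 12*k+37, (hGm _).mpr (by omega), by omega⟩
      · exact ⟨12*k+32, (hGm _).mpr (by omega), 12*k+37, (hGm _).mpr (by omega), by omega⟩
      · exact ⟨12*k+36, (hGm _).mpr (by omega), 12*k+36, (hGm _).mpr (by omega), by omega⟩
      · exact ⟨12*k+36, (hGm _).mpr (by omega), 12*k+37, (hGm _).mpr (by omega), by omega⟩
      · exact ⟨12*k+37, (hGm _).mpr (by omega), 12*k+37, (hGm _).mpr (by omega), by omega⟩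
  have h3 : ∀ x : ℕ, x ∈ 3 • G ↔ (3 ≤ x ∧ x ≤ 30*k+92) ∨
      (36*k+93 ≤ x ∧ x ≤ 36*k+111 ∧ x ≠ 36*k+97 ∧ x ≠ 36*k+102 ∧ x ≠ 36*k+107) := by
    intro x
    rw [show (3 : ℕ) = 2 + 1 by rfl, succ_nsmul, Finset.mem_add]
    constructor
    · rintro ⟨b, hb, c, hc, rfl⟩
      have hb' := (h2 b).mp hb
      have hc' := (hGm c).mp hc
      omega
    · rintro (⟨hx1, hx2⟩ | ⟨hx1, hx2, hx3, hx4, hx5⟩)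
      · by_cases c1 : x ≤ 18*k+56
        · exact ⟨x - 1, (h2 _).mpr (by omega), 1, (hGm _).mpr (by omega), by omega⟩
        by_cases c2 : x ≤ 24*k+73
        · exact ⟨18*k+55, (h2 _).mpr (by omega), x - (18*k+55), (hGm _).mpr (by omega), by omega⟩
        · exact ⟨x - (12*k+37), (h2 _).mpr (by omega), 12*k+37, (hGm _).mpr (by omega), by omega⟩
      · obtain ⟨d, hd, hxd⟩ : ∃ d, d ≤ 18 ∧ x = 36*k+93+d := ⟨x - (36*k+93), by omega, by omega⟩
        interval_cases d <;>
        first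
          | omega
          | exact ⟨x - (12*k+31), (h2 _).mpr (by omega), 12*k+31, (hGm _).mpr (by omega), by omega⟩
          | exact ⟨x - (12*k+32), (h2 _).mpr (by omega), 12*k+32, (hGm _).mpr (by omega), by omega⟩
          | exact ⟨x - (12*k+36), (h2 _).mpr (by omega), 12*k+36, (hGm _).mpr (by omega), by omega⟩
          | exact ⟨x - (12*k+37), (h2 _).mpr (by omega), 12*k+37, (hGm _).mpr (by omega), by omega⟩
  have key : ∀ n : ℕ, 4 ≤ n → ∀ x : ℕ, x ∈ n • G ↔
      (n ≤ x ∧ x ≤ n*(12*k+37) ∧ (x ≤ n*(12*k+37) - (6*k+19) ∨ n*(12*k+37) - 6*n ≤ x)) := by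
    intro n hn
    induction n, hn using Nat.le_induction with
    | base =>
      have e4 : 4*(12*k+37) = 48*k+148 := by ring
      intro x
      rw [e4, show (4 : ℕ) = 3 + 1 by rfl, succ_nsmul, Finset.mem_add]
      constructor
      · rintro ⟨b, hb, c, hc, rfl⟩
        have hb' := (h3 b).mp hb
        have hc' := (hGm c).mp hc
        omega
      · rintro ⟨hx1, hx2, hx3⟩
        by_cases c1 : x ≤ 30*k+93
        · exact ⟨x - 1, (h3 _).mpr (by omega), 1, (hGm _).mpr (by omega), by omega⟩
        by_cases c2 : x ≤ 36*k+110
        · exact ⟨30*k+92, (h3 _).mpr (by omega), x - (30*k+92), (hGm _).mpr (by omega), by omega⟩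
        by_cases c3 : x ≤ 42*k+129
        · exact ⟨x - (12*k+37), (h3 _).mpr (by omega), 12*k+37, (hGm _).mpr (by omega), by omega⟩
        -- now 48*k+124 ≤ x ≤ 48*k+148
        obtain ⟨d, hd, hxd⟩ : ∃ d, d ≤ 24 ∧ x = 48*k+124+d := ⟨x - (48*k+124), by omega, by omega⟩
        interval_cases d <;>
        first
          | exact ⟨x - (12*k+31), (h3 _).mpr (by omega), 12*k+31, (hGm _).mpr (by omega), by omega⟩
          | exact ⟨x - (12*k+32), (h3 _).mpr (by omega), 12*k+32, (hGm _).mpr (by omega), by omega⟩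
          | exact ⟨x - (12*k+36), (h3 _).mpr (by omega), 12*k+36, (hGm _).mpr (by omega), by omega⟩
          | exact ⟨x - (12*k+37), (h3 _).mpr (by omega), 12*k+37, (hGm _).mpr (by omega), by omega⟩
    | succ n hn IH =>
      obtain ⟨b, rfl⟩ : ∃ b, n = b + 4 := ⟨n - 4, by omega⟩
      have e1 : (b+4)*(12*k+37) = 12*(b*k)+37*b+48*k+148 := by ring
      have e2 : (b+4+1)*(12*k+37) = 12*(b*k)+37*b+60*k+185 := by ring
      intro x
      rw [succ_nsmul, Finset.mem_add, e2]
      simp only [e1] at IH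
      constructor
      · rintro ⟨y, hy, g, hg, rfl⟩
        have hy' := (IH y).mp hy
        have hg' := (hGm g).mp hg
        omega
      · rintro ⟨hx1, hx2, hx3⟩
        by_cases c1 : x ≤ 12*(b*k)+37*b+42*k+130
        · exact ⟨x - 1, (IH _).mpr (by omega), 1, (hGm _).mpr (by omega), by omega⟩
        by_cases c2 : x ≤ 12*(b*k)+37*b+48*k+147
        · exact ⟨12*(b*k)+37*b+42*k+129, (IH _).mpr (by omega),
            x - (12*(b*k)+37*b+42*k+129), (hGm _).mpr (by omega), by omega⟩
        by_cases c3 : x ≤ 12*(b*k)+37*b+54*k+166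
        · exact ⟨x - (12*k+37), (IH _).mpr (by omega), 12*k+37, (hGm _).mpr (by omega), by omega⟩
        by_cases c4 : x ≤ 12*(b*k)+37*b+60*k+179
        · exact ⟨x - (12*k+31), (IH _).mpr (by omega), 12*k+31, (hGm _).mpr (by omega), by omega⟩
        by_cases c5 : x ≤ 12*(b*k)+37*b+60*k+180
        · exact ⟨x - (12*k+32), (IH _).mpr (by omega), 12*k+32, (hGm _).mpr (by omega), by omega⟩
        by_cases c6 : x ≤ 12*(b*k)+37*b+60*k+184
        · exact ⟨x - (12*k+36), (IH _).mpr (by omega), 12*k+36, (hGm _).mpr (by omega), by omega⟩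
        · exact ⟨x - (12*k+37), (IH _).mpr (by omega), 12*k+37, (hGm _).mpr (by omega), by omega⟩
  have hGcard : G.card = 6*k+22 := by
    rw [hG]
    rw [Finset.card_union_of_disjoint (by
      rw [Finset.disjoint_left]
      intro a ha hb
      simp only [Finset.mem_Icc] at ha
      simp only [Finset.mem_insert, Finset.mem_singleton] at hb
      omega)]
    rw [Nat.card_Icc]
    rw [Finset.card_insert_of_notMem (by simp only [Finset.mem_insert, Finset.mem_singleton]; omega),
        Finset.card_insert_of_notMem (by simp only [Finset.mem_insert, Finset.mem_singleton]; omega),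
        Finset.card_insert_of_notMem (by simp only [Finset.mem_singleton]; omega),
        Finset.card_singleton]
    omega
  -- card 2G
  have hc2 : (2 • G).card = 18*k+63 := by
    have he : 2 • G = Finset.Icc 2 (18*k+55) ∪ Finset.Icc (24*k+62) (24*k+64) ∪
        Finset.Icc (24*k+67) (24*k+69) ∪ Finset.Icc (24*k+72) (24*k+74) := by
      ext x
      rw [h2]
      simp only [Finset.mem_union, Finset.mem_Icc]
      omega
    rw [he]
    rw [Finset.card_union_of_disjoint (by
        rw [Finset.disjoint_left]; intro a ha hb
        simp only [Finset.mem_union, Finset.mem_Icc] at ha hb; omega),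
      Finset.card_union_of_disjoint (by
        rw [Finset.disjoint_left]; intro a ha hb
        simp only [Finset.mem_union, Finset.mem_Icc] at ha hb; omega),
      Finset.card_union_of_disjoint (by
        rw [Finset.disjoint_left]; intro a ha hb
        simp only [Finset.mem_union, Finset.mem_Icc] at ha hb; omega)]
    simp only [Nat.card_Icc]
    omega
  -- card 3G
  have hc3 : (3 • G).card = 30*k+106 := by
    have he : 3 • G = Finset.Icc 3 (30*k+92) ∪ Finset.Icc (36*k+93) (36*k+96) ∪
        Finset.Icc (36*k+98) (36*k+101) ∪ Finset.Icc (36*k+103) (36*k+106) ∪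
        Finset.Icc (36*k+108) (36*k+111) := by
      ext x
      rw [h3]
      simp only [Finset.mem_union, Finset.mem_Icc]
      omega
    rw [he]
    rw [Finset.card_union_of_disjoint (by
        rw [Finset.disjoint_left]; intro a ha hb
        simp only [Finset.mem_union, Finset.mem_Icc] at ha hb; omega),
      Finset.card_union_of_disjoint (by
        rw [Finset.disjoint_left]; intro a ha hb
        simp only [Finset.mem_union, Finset.mem_Icc] at ha hb; omega),
      Finset.card_union_of_disjoint (by
        rw [Finset.disjoint_left]; intro a ha hb
        simp only [Finset.mem_union, Finset.mem_Icc] at ha hb; omega),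
      Finset.card_union_of_disjoint (by
        rw [Finset.disjoint_left]; intro a ha hb
        simp only [Finset.mem_union, Finset.mem_Icc] at ha hb; omega)]
    simp only [Nat.card_Icc]
    omega
  -- card for 4 ≤ n ≤ k+2
  have hcmid : ∀ n : ℕ, 4 ≤ n → n ≤ k + 2 → (n • G).card + (6*k+17) = 12*(k*n) + 42*n := by
    intro n hn4 hnk
    obtain ⟨b, rfl⟩ : ∃ b, n = b + 4 := ⟨n - 4, by omega⟩
    have e0 : k*(b+4) = k*b+4*k := by ring
    have e1 : (b+4)*(12*k+37) = 12*(k*b)+37*b+48*k+148 := by ring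
    have he : (b+4) • G = Finset.Icc (b+4) (12*(k*b)+37*b+42*k+129) ∪
        Finset.Icc (12*(k*b)+31*b+48*k+124) (12*(k*b)+37*b+48*k+148) := by
      ext x
      rw [key (b+4) (by omega), e1]
      simp only [Finset.mem_union, Finset.mem_Icc]
      omega
    rw [he, Finset.card_union_of_disjoint (by
        rw [Finset.disjoint_left]; intro a ha hb
        simp only [Finset.mem_Icc] at ha hb; omega)]
    simp only [Nat.card_Icc]
    omega
  -- card for n ≥ k+3
  have hchigh : ∀ n : ℕ, k + 3 ≤ n → (n • G).card = 12*(k*n) + 36*n + 1 := by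
    intro n hnk
    obtain ⟨b, rfl⟩ : ∃ b, n = b + 4 := ⟨n - 4, by omega⟩
    have e0 : k*(b+4) = k*b+4*k := by ring
    have e1 : (b+4)*(12*k+37) = 12*(k*b)+37*b+48*k+148 := by ring
    have he : (b+4) • G = Finset.Icc (b+4) (12*(k*b)+37*b+48*k+148) := by
      ext x
      rw [key (b+4) (by omega), e1]
      simp only [Finset.mem_Icc]
      omega
    rw [he, Nat.card_Icc]
    omega
  -- β computations
  have hβ2 : β 2 = 0 := by
    rw [hβ 2, hc2, hGcard]; push_cast; ring
  have hβ3 : β 3 = 1 := by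
    rw [hβ 3, hc3, hGcard]; push_cast; ring
  have hβhigh : ∀ n : ℕ, k + 3 ≤ n → β n = 6 * (k : ℤ) - 6 * n + 22 := by
    intro n hn
    have h := hchigh n hn
    have hc : ((n • G).card : ℤ) = 12*(k:ℤ)*n + 36*n + 1 := by
      have := congrArg (Nat.cast : ℕ → ℤ) h
      push_cast at this
      linarith
    rw [hβ n, hc, hGcard]; push_cast; ring
  have hβmid : ∀ n : ℕ, 4 ≤ n → n ≤ k + 3 → β n = 4 := by
    intro n hn4 hnk
    rcases Nat.lt_or_ge n (k+3) with h | h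
    · have hm := hcmid n hn4 (by omega)
      have hc : ((n • G).card : ℤ) = 12*(k:ℤ)*n + 42*n - (6*k+17) := by
        have := congrArg (Nat.cast : ℕ → ℤ) hm
        push_cast at this
        linarith
      rw [hβ n, hc, hGcard]; push_cast; ring
    · have hn3 : n = k + 3 := by omega
      rw [hβhigh n (by omega), hn3]; push_cast; ring
  refine ⟨hβ2, hβ3, hβmid, fun n hn => hβhigh n (by omega), ?_⟩
  ext n
  simp only [Set.mem_setOf_eq, Set.mem_Icc]
  constructor
  · rintro ⟨h2n, hβn⟩
    have hcase : n = 2 ∨ n = 3 ∨ (4 ≤ n ∧ n ≤ k + 3) ∨ k + 4 ≤ n := by omega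
    rcases hcase with rfl | rfl | ⟨h4, hk3⟩ | hhi
    · rw [hβ2] at hβn; omega
    · omega
    · omega
    · rw [hβhigh n (by omega)] at hβn; omega
  · rintro ⟨h3n, hkn⟩
    refine ⟨by omega, ?_⟩
    rcases Nat.lt_or_ge n 4 with h | h
    · have : n = 3 := by omega
      rw [this, hβ3]
    · rw [hβmid n h hkn]
      norm_num
end

section
/- For k ≥ 1, let m = 6k+19 and A = [0,1] ∪ {5,6} ∪ [m, 2(m-1)]. Then for all n ≥ 4, the n-fold sumset satisfies nA = [0, 6n] ∪ [m, 2n(m-1)]. -/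
open Pointwise

private lemma icc_add_icc' (a b c d : ℕ) (h1 : a ≤ b) (h2 : c ≤ d) :
    Finset.Icc a b + Finset.Icc c d = Finset.Icc (a + c) (b + d) := by
  ext x
  simp only [Finset.mem_add, Finset.mem_Icc]
  constructor
  · rintro ⟨y, ⟨hy1, hy2⟩, z, ⟨hz1, hz2⟩, rfl⟩; omega
  · rintro ⟨h3, h4⟩
    exact ⟨max a (x - d), ⟨le_max_left _ _, by omega⟩, x - max a (x - d), ⟨by omega, by omega⟩,
      by omega⟩

private lemma s_add_icc (c d : ℕ) (h : c + 3 ≤ d) :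
    ({0, 1, 5, 6} : Finset ℕ) + Finset.Icc c d = Finset.Icc c (d + 6) := by
  ext x
  simp only [Finset.mem_add, Finset.mem_Icc, Finset.mem_insert, Finset.mem_singleton]
  constructor
  · rintro ⟨y, hy, z, ⟨hz1, hz2⟩, rfl⟩
    rcases hy with rfl | rfl | rfl | rfl <;> omega
  · rintro ⟨h1, h2⟩
    by_cases hx : x ≤ d
    · exact ⟨0, by tauto, x, ⟨by omega, by omega⟩, by omega⟩
    by_cases hx2 : x ≤ d + 1
    · exact ⟨1, by tauto, x - 1, ⟨by omega, by omega⟩, by omega⟩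
    by_cases hx3 : x ≤ d + 5
    · exact ⟨5, by tauto, x - 5, ⟨by omega, by omega⟩, by omega⟩
    · exact ⟨6, by tauto, x - 6, ⟨by omega, by omega⟩, by omega⟩

private lemma step_lemma (m : ℕ) (hm : 25 ≤ m) (A : Finset ℕ)
    (hA : A = ({0, 1, 5, 6} : Finset ℕ) ∪ Finset.Icc m (2 * m - 2))
    (N M : ℕ) (hN : 4 ≤ N) (hM : 2 * m - 7 ≤ M) (hNM : N ≤ M) :
    A + (Finset.Icc 0 N ∪ Finset.Icc m M)
      = Finset.Icc 0 (N + 6) ∪ Finset.Icc m (M + (2 * m - 2)) := by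
  rw [hA, Finset.union_add, Finset.add_union, Finset.add_union,
    s_add_icc 0 N (by omega), s_add_icc m M (by omega),
    icc_add_icc' m (2 * m - 2) 0 N (by omega) (by omega),
    icc_add_icc' m (2 * m - 2) m M (by omega) (by omega)]
  ext x
  simp only [Finset.mem_union, Finset.mem_Icc]
  omega

theorem stmt16 (k : ℕ) (hk : 1 ≤ k) (m : ℕ) (hm : m = 6 * k + 19)
    (A : Finset ℕ) (hA : A = Finset.Icc 0 1 ∪ {5, 6} ∪ Finset.Icc m (2 * (m - 1))) :
    ∀ n : ℕ, 4 ≤ n →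
      n • A = Finset.Icc 0 (6 * n) ∪ Finset.Icc m (2 * n * (m - 1)) := by
  have hm25 : 25 ≤ m := by omega
  have hA' : A = ({0, 1, 5, 6} : Finset ℕ) ∪ Finset.Icc m (2 * m - 2) := by
    rw [hA]
    ext x
    simp only [Finset.mem_union, Finset.mem_Icc, Finset.mem_insert, Finset.mem_singleton]
    omega
  -- 2 • A
  have hT : ({0, 1, 5, 6} : Finset ℕ) + {0, 1, 5, 6} = {0, 1, 2, 5, 6, 7, 10, 11, 12} := by
    decide
  have h2 : (2 : ℕ) • A
      = ({0, 1, 2, 5, 6, 7, 10, 11, 12} : Finset ℕ) ∪ Finset.Icc m (4 * m - 4) := by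
    rw [two_nsmul, hA', Finset.union_add, Finset.add_union, Finset.add_union, hT,
      s_add_icc m (2 * m - 2) (by omega),
      add_comm (Finset.Icc m (2 * m - 2)) ({0, 1, 5, 6} : Finset ℕ),
      s_add_icc m (2 * m - 2) (by omega),
      icc_add_icc' m (2 * m - 2) m (2 * m - 2) (by omega) (by omega)]
    ext x
    simp only [Finset.mem_union, Finset.mem_Icc, Finset.mem_insert, Finset.mem_singleton]
    omega
  -- T + Icc c d for suitable c d, via T = S + S
  have hTicc : ∀ c d : ℕ, c + 3 ≤ d →
      ({0, 1, 2, 5, 6, 7, 10, 11, 12} : Finset ℕ) + Finset.Icc c d = Finset.Icc c (d + 12) := by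
    intro c d hcd
    rw [← hT, add_assoc, s_add_icc c d hcd, s_add_icc c (d + 6) (by omega)]
  have hTT : ({0, 1, 2, 5, 6, 7, 10, 11, 12} : Finset ℕ) + {0, 1, 2, 5, 6, 7, 10, 11, 12}
      = Finset.Icc 0 24 := by decide
  -- base case n = 4
  have h4 : (4 : ℕ) • A = Finset.Icc 0 24 ∪ Finset.Icc m (8 * m - 8) := by
    have : (4 : ℕ) • A = (2 : ℕ) • A + (2 : ℕ) • A := by
      rw [← add_nsmul]
    rw [this, h2, Finset.union_add, Finset.add_union, Finset.add_union, hTT,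
      hTicc m (4 * m - 4) (by omega),
      add_comm (Finset.Icc m (4 * m - 4)) ({0, 1, 2, 5, 6, 7, 10, 11, 12} : Finset ℕ),
      hTicc m (4 * m - 4) (by omega),
      icc_add_icc' m (4 * m - 4) m (4 * m - 4) (by omega) (by omega)]
    ext x
    simp only [Finset.mem_union, Finset.mem_Icc]
    omega
  intro n hn
  induction n, hn using Nat.le_induction with
  | base =>
    rw [h4]
    ext x
    simp only [Finset.mem_union, Finset.mem_Icc]
    omega
  | succ n hn ih =>
    have hM1 : 6 * n ≤ 2 * n * (m - 1) := by
      calc 6 * n = 2 * n * 3 := by ring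
        _ ≤ 2 * n * (m - 1) := Nat.mul_le_mul_left _ (by omega)
    have hM2 : 2 * m - 7 ≤ 2 * n * (m - 1) := by
      calc 2 * m - 7 ≤ 2 * 1 * (m - 1) := by omega
        _ ≤ 2 * n * (m - 1) := Nat.mul_le_mul_right _ (by omega)
    have hM3 : 2 * (n + 1) * (m - 1) = 2 * n * (m - 1) + (2 * m - 2) := by
      have : 2 * (n + 1) * (m - 1) = 2 * n * (m - 1) + 2 * (m - 1) := by ring
      omega
    rw [succ_nsmul, add_comm, ih, step_lemma m hm25 A hA' (6 * n) (2 * n * (m - 1))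
      (by omega) hM2 hM1]
    ext x
    simp only [Finset.mem_union, Finset.mem_Icc]
    omega
end

section
/- For k ≥ 1, let A = [0,1] ∪ {6+2k} ∪ [43 + 26k + 4k², 85 + 53k + 8k²]. Then for all n ≥ 1, nA = [0,n] ∪ (⋃_{i=1}^{n} [i(6+2k), i(6+2k) + n - i]) ∪ [43 + 26k + 4k², (85 + 53k + 8k²)n]. -/
open Pointwise

theorem sumset_aux (b c d : ℕ) (hb : 1 ≤ b) (hbd : b ≤ d) (hcd : c ≤ d)
    (h2c : 2 * c ≤ d + 2) :
    ∀ n : ℕ, 1 ≤ n → n • (Finset.Icc 0 1 ∪ {b} ∪ Finset.Icc c d) =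
      Finset.Icc 0 n ∪
        (Finset.Icc 1 n).biUnion (fun i => Finset.Icc (i * b) (i * b + n - i)) ∪
        Finset.Icc c (d * n) := by
  intro n hn
  induction n, hn using Nat.le_induction with
  | base =>
      rw [one_nsmul, Finset.Icc_self, Finset.singleton_biUnion]
      norm_num
  | succ n hn ih =>
      rw [succ_nsmul, ih]
      have hd1 : 1 ≤ d := le_trans hb hbd
      have hdn : d * (n + 1) = d * n + d := by ring
      have hnd : n * 1 ≤ n * d := Nat.mul_le_mul_left n hd1
      have hnd' : n * d = d * n := by ring
      ext x
      simp only [Finset.mem_add, Finset.mem_union, Finset.mem_biUnion, Finset.mem_Icc,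
        Finset.mem_singleton, Nat.zero_le, true_and]
      constructor
      · rintro ⟨y, hy, z, hz, rfl⟩
        rcases hy with (hy | ⟨i, ⟨hi1, hi2⟩, hy1, hy2⟩) | ⟨hy1, hy2⟩
        · rcases hz with (hz | hz) | ⟨hz1, hz2⟩
          · exact Or.inl (Or.inl (by omega))
          · refine Or.inl (Or.inr ⟨1, ⟨le_refl 1, by omega⟩, ?_, ?_⟩) <;>
              (have h1 : 1 * b = b := by ring) <;> omega
          · exact Or.inr ⟨by omega, by omega⟩
        · rcases hz with (hz | hz) | ⟨hz1, hz2⟩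
          · exact Or.inl (Or.inr ⟨i, ⟨hi1, by omega⟩, by omega, by omega⟩)
          · have h1 : (i + 1) * b = i * b + b := by ring
            exact Or.inl (Or.inr ⟨i + 1, ⟨by omega, by omega⟩, by omega, by omega⟩)
          · have h1 : i * b + (n - i) * b = n * b := by rw [← add_mul]; congr 1; omega
            have h3 : (n - i) * 1 ≤ (n - i) * b := Nat.mul_le_mul_left _ hb
            have h2 : n * b ≤ n * d := Nat.mul_le_mul_left n hbd
            exact Or.inr ⟨by omega, by omega⟩
        · rcases hz with (hz | hz) | ⟨hz1, hz2⟩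
          · exact Or.inr ⟨by omega, by omega⟩
          · exact Or.inr ⟨by omega, by omega⟩
          · exact Or.inr ⟨by omega, by omega⟩
      · rintro ((hx | ⟨i, ⟨hi1, hi2⟩, hx1, hx2⟩) | ⟨hx1, hx2⟩)
        · exact ⟨min x n, Or.inl (Or.inl (by omega)), x - min x n,
            Or.inl (Or.inl (by omega)), by omega⟩
        · by_cases hin : i ≤ n
          · refine ⟨min x (i * b + n - i),
              Or.inl (Or.inr ⟨i, ⟨hi1, hin⟩, by omega, by omega⟩),
              x - min x (i * b + n - i), Or.inl (Or.inl (by omega)), by omega⟩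
          · have hi : i = n + 1 := by omega
            subst hi
            have h1 : (n + 1) * b = n * b + b := by ring
            exact ⟨n * b, Or.inl (Or.inr ⟨n, ⟨hn, le_refl n⟩, le_refl _, by omega⟩),
              b, Or.inl (Or.inr rfl), by omega⟩
        · have hddn : d * 1 ≤ d * n := Nat.mul_le_mul_left d hn
          by_cases hx3 : x ≤ d * n + 1
          · exact ⟨min x (d * n), Or.inr ⟨by omega, by omega⟩,
              x - min x (d * n), Or.inl (Or.inl (by omega)), by omega⟩
          · exact ⟨x - min d (x - c), Or.inr ⟨by omega, by omega⟩,
              min d (x - c), Or.inr ⟨by omega, by omega⟩, by omega⟩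

theorem stmt17 (k : ℕ) (hk : 1 ≤ k)
    (A : Finset ℕ)
    (hA : A = Finset.Icc 0 1 ∪ {6 + 2 * k} ∪
      Finset.Icc (43 + 26 * k + 4 * k ^ 2) (85 + 53 * k + 8 * k ^ 2)) :
    ∀ n : ℕ, 1 ≤ n →
      n • A = Finset.Icc 0 n ∪
        (Finset.Icc 1 n).biUnion
          (fun i => Finset.Icc (i * (6 + 2 * k)) (i * (6 + 2 * k) + n - i)) ∪
        Finset.Icc (43 + 26 * k + 4 * k ^ 2) ((85 + 53 * k + 8 * k ^ 2) * n) := by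
  subst hA
  exact sumset_aux (6 + 2 * k) (43 + 26 * k + 4 * k ^ 2) (85 + 53 * k + 8 * k ^ 2)
    (by omega) (by omega) (by omega) (by omega)
end

section
/- For each integer k ≥ 1, there exists a numerical semigroup S such that the Buchweitz set B(S) = {n ≥ 2 : |nG| > (2n-1)(|G|-1)}, where G = ℕ \ S, equals the integer interval [7+2k, 7+4k]. One such S has gapset G = [1, 43+27k+4k²] ∪ {80+51k+8k², 85+53k+8k², 86+53k+8k²}. -/
/-!
Write `G = [1, F] ∪ {A, A + p, A + p + 1}` with `p = 2k + 5`. For `n ≥ 1` the sumset `nG` is the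
interval `[n, F + (n - 1)(A + p + 1)]` together with `n • {A, A + p, A + p + 1}`, and the latter is
the union of the blocks `[nA + mp, nA + mp + m]`, `m ≤ n`; blocks with `m ≥ p - 1` overlap and
merge into a single interval. Because `A = F + (p + 1)² + 1`, for `n = p + 2 + q` the interval ends
at `nA + q(p + 1) - 1`, swallowing the blocks `m ≤ q`, which makes `|nG|` exactly computable:
`2|nG| = 2(2n - 1)(|G| - 1) + 2 + (q + 1)(2k - q)`, so `n` is a Buchweitz number iff `q ≤ 2k`.
For `n ≤ p + 1` the bound `|nG| ≤ |interval| + |blocks|`, and for `n ≥ 4k + 9` the bound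
`nG ⊆ [n, n(A + p + 1)]`, already give `|nG| ≤ (2n - 1)(|G| - 1)`.
-/

open Pointwise Finset

namespace Nat

lemma Icc_add_Icc {a b c d : ℕ} (hab : a ≤ b) (hcd : c ≤ d) :
    Icc a b + Icc c d = Icc (a + c) (b + d) := by
  ext x
  simp only [mem_add, mem_Icc]
  constructor
  · rintro ⟨y, hy, z, hz, rfl⟩
    omega
  · intro hx
    exact ⟨max a (x - d), by omega, x - max a (x - d), by omega, by omega⟩

lemma Icc_add_singleton {a b : ℕ} (hab : a ≤ b) (c : ℕ) :
    Icc a b + {c} = Icc (a + c) (b + c) := by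
  rw [← Icc_self c, Icc_add_Icc hab le_rfl]

lemma nsmul_Icc {a b : ℕ} (hab : a ≤ b) (n : ℕ) : n • Icc a b = Icc (n * a) (n * b) := by
  induction n with
  | zero => simp only [zero_nsmul, zero_mul, Icc_self]; rfl
  | succ n ih =>
    rw [succ_nsmul, ih, Icc_add_Icc (Nat.mul_le_mul_left n hab) hab, add_one_mul, add_one_mul]

end Nat

/-- The sums of `m` terms from `{p, p + 1}`, shifted by `a`. -/
def block (a p m : ℕ) : Finset ℕ := Icc (a + m * p) (a + m * p + m)

lemma nsmul_triple (a p n : ℕ) :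
    n • ({a, a + p, a + p + 1} : Finset ℕ) = (range (n + 1)).biUnion (block (n * a) p) := by
  induction n with
  | zero => ext x; simp [block]
  | succ n ih =>
    ext x
    rw [succ_nsmul, ih]
    simp only [mem_add, mem_biUnion, mem_range, block, mem_Icc, mem_insert, mem_singleton]
    have ha : (n + 1) * a = n * a + a := add_one_mul n a
    constructor
    · rintro ⟨y, ⟨m, hm, hy⟩, z, hz, rfl⟩
      have hp : (m + 1) * p = m * p + p := add_one_mul m p
      rcases hz with rfl | rfl | rfl
      · exact ⟨m, by omega, by omega⟩
      · exact ⟨m + 1, by omega, by omega⟩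
      · exact ⟨m + 1, by omega, by omega⟩
    · rintro ⟨m, hm, hx⟩
      obtain hm | rfl : m < n + 1 ∨ m = n + 1 := by omega
      · exact ⟨x - a, ⟨m, hm, by omega⟩, a, by simp, by omega⟩
      · have hp : (n + 1) * p = n * p + p := add_one_mul n p
        obtain hx' | hx' : x = n * a + n * p + a + p ∨ n * a + n * p + a + p < x := by omega
        · exact ⟨n * a + n * p, ⟨n, by omega, by omega⟩, a + p, by simp, by omega⟩
        · exact ⟨x - (a + p + 1), ⟨n, by omega, by omega⟩, a + p + 1, by simp, by omega⟩

theorem succ_nsmul_gapset {F A p : ℕ} (hF : 1 ≤ F) (hpF : p ≤ F) (hFA : F ≤ A) (hA : A ≤ 2 * F)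
    (n : ℕ) :
    (n + 1) • (Icc 1 F ∪ {A, A + p, A + p + 1}) =
      Icc (n + 1) (F + n * (A + p + 1)) ∪ (n + 1) • {A, A + p, A + p + 1} := by
  induction n with
  | zero => simp
  | succ n ih =>
    set S : Finset ℕ := {A, A + p, A + p + 1} with hS
    set E := F + n * (A + p + 1) with hE
    have hn : n ≤ n * (A + p + 1) := Nat.le_mul_of_pos_right n (by omega)
    have hnE : n + 1 ≤ E := by omega
    have hE' : F + (n + 1) * (A + p + 1) = E + (A + p + 1) := by rw [hE]; ring
    have hI : (Icc (n + 1) E + Icc 1 F) ∪ (Icc (n + 1) E + S) =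
        Icc (n + 1 + 1) (F + (n + 1) * (A + p + 1)) := by
      rw [hS, insert_eq, insert_eq, add_union, add_union, Nat.Icc_add_Icc hnE hF,
        Nat.Icc_add_singleton hnE, Nat.Icc_add_singleton hnE, Nat.Icc_add_singleton hnE, hE']
      ext x
      simp only [mem_union, mem_Icc]
      omega
    have hY : (n + 1) • S + Icc 1 F ⊆ Icc (n + 1 + 1) (F + (n + 1) * (A + p + 1)) := by
      have hSI : S ⊆ Icc A (A + p + 1) := by
        intro x
        simp only [hS, mem_insert, mem_singleton, mem_Icc]
        omega
      have := Nat.nsmul_Icc (show A ≤ A + p + 1 by omega) (n + 1) ▸ nsmul_subset_nsmul_left hSI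
      refine (add_subset_add_right this).trans ?_
      rw [Nat.Icc_add_Icc (Nat.mul_le_mul_left _ (by omega)) hF]
      exact Icc_subset_Icc (by nlinarith) (by omega)
    rw [succ_nsmul _ (n + 1), ih, union_add, add_union, add_union, hI, ← succ_nsmul,
      ← union_assoc, union_eq_left.2 hY]

lemma two_mul_sum_Ico_add_one {b c : ℕ} (h : b ≤ c) :
    2 * ∑ m ∈ Ico b c, (m + 1) + b * (b + 1) = c * (c + 1) := by
  induction c, h using Nat.le_induction with
  | base => simp
  | succ c hbc ih => rw [sum_Ico_succ_top hbc]; linarith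

lemma mul_add_lt_mul {m m' p : ℕ} (hmm' : m < m') (hm : m < p) : m * p + m < m' * p := by
  have : (m + 1) * p ≤ m' * p := Nat.mul_le_mul_right p hmm'
  rw [add_one_mul] at this
  omega

section Blocks

variable {a p : ℕ}

lemma card_block (m : ℕ) : #(block a p m) = m + 1 := by
  rw [block, Nat.card_Icc]
  omega

lemma disjoint_block {m m' : ℕ} (hm : m < p) (hm' : m' < p) (hne : m ≠ m') :
    Disjoint (block a p m) (block a p m') := by
  rw [disjoint_left]
  intro x hx hx'
  simp only [block, mem_Icc] at hx hx'
  rcases lt_or_gt_of_ne hne with h | h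
  · have := mul_add_lt_mul h hm
    omega
  · have := mul_add_lt_mul h hm'
    omega

lemma biUnion_Ico_block {c n : ℕ} (hc : p ≤ c + 1) (hcn : c ≤ n) :
    (Ico c (n + 1)).biUnion (block a p) = Icc (a + c * p) (a + n * (p + 1)) := by
  induction n, hcn using Nat.le_induction with
  | base => simp [block, mul_add_one, add_assoc]
  | succ n hcn ih =>
    have hcp : c * p ≤ n * p := Nat.mul_le_mul_right p hcn
    rw [← insert_Ico_right_eq_Ico_add_one (by omega), biUnion_insert, ih, block, union_comm]
    ext x
    simp only [mem_union, mem_Icc, add_one_mul, mul_add_one]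
    omega

lemma Ico_union_biUnion_block (q : ℕ) :
    Ico a (a + q * (p + 1)) ∪ (range (q + 1)).biUnion (block a p) = Icc a (a + q * (p + 1)) := by
  apply Subset.antisymm
  · refine union_subset Ico_subset_Icc_self (biUnion_subset.2 fun m hm ↦ ?_)
    have : m * (p + 1) ≤ q * (p + 1) :=
      Nat.mul_le_mul_right _ (by simpa [Nat.lt_succ_iff] using hm)
    simp only [block, mul_add_one] at this ⊢
    exact Icc_subset_Icc (by omega) (by omega)
  · intro x hx
    rw [mem_Icc] at hx
    obtain hx' | rfl := lt_or_eq_of_le hx.2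
    · exact mem_union_left _ (mem_Ico.2 ⟨hx.1, hx'⟩)
    · refine mem_union_right _ (mem_biUnion.2 ⟨q, by simp, ?_⟩)
      rw [block, mem_Icc, mul_add_one]
      omega

lemma two_mul_card_biUnion_Ico_block {b c : ℕ} (hbc : b ≤ c) (hcp : c ≤ p) :
    2 * #((Ico b c).biUnion (block a p)) + b * (b + 1) = c * (c + 1) := by
  rw [card_biUnion fun m hm m' hm' ↦ disjoint_block (by simp at hm; omega) (by simp at hm'; omega),
    sum_congr rfl fun m _ ↦ card_block m]
  exact two_mul_sum_Ico_add_one hbc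

lemma Ico_union_biUnion_block_eq {q n r : ℕ} (hqr : q < r) (hrn : r ≤ n) :
    Ico a (a + q * (r + 1 + 1)) ∪ (range (n + 1)).biUnion (block a (r + 1)) =
      Icc a (a + q * (r + 1 + 1)) ∪ (Ico (q + 1) r).biUnion (block a (r + 1)) ∪
        Icc (a + r * (r + 1)) (a + n * (r + 1 + 1)) := by
  have hsplit : range (n + 1) = range (q + 1) ∪ Ico (q + 1) r ∪ Ico r (n + 1) := by
    ext m
    simp only [mem_union, mem_range, mem_Ico]
    omega
  rw [hsplit, union_biUnion, union_biUnion, ← union_assoc, ← union_assoc, Ico_union_biUnion_block,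
    biUnion_Ico_block le_rfl (by omega)]

lemma two_mul_card_Ico_union_biUnion_block {q n : ℕ} (hqp : q + 2 ≤ p) (hpn : p ≤ n + 1) :
    2 * #(Ico a (a + q * (p + 1)) ∪ (range (n + 1)).biUnion (block a p)) + (p - 1) * p +
      (q + 1) * (q + 2) = 2 * (q + n) * (p + 1) + 4 := by
  obtain ⟨r, rfl⟩ : ∃ r, p = r + 1 := ⟨p - 1, by omega⟩
  rw [Nat.add_sub_cancel, Ico_union_biUnion_block_eq (by omega) (by omega)]
  set mid := (Ico (q + 1) r).biUnion (block a (r + 1))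
  have hlow : Disjoint (Icc a (a + q * (r + 1 + 1))) mid := by
    refine (disjoint_biUnion_right _ _ _).2 fun m hm ↦ disjoint_left.2 fun x hx hx' ↦ ?_
    have := mul_add_lt_mul (mem_Ico.1 hm).1 (show q < r + 1 by omega)
    simp only [block, mem_Icc] at hx hx'
    rw [mul_add_one (q : ℕ)] at hx
    omega
  have htop : Disjoint (Icc a (a + q * (r + 1 + 1)) ∪ mid)
      (Icc (a + r * (r + 1)) (a + n * (r + 1 + 1))) := by
    rw [disjoint_union_left]
    constructor
    · refine disjoint_left.2 fun x hx hx' ↦ ?_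
      have := mul_add_lt_mul (show q < r by omega) (show q < r + 1 by omega)
      rw [mem_Icc, mul_add_one (q : ℕ)] at hx
      rw [mem_Icc] at hx'
      omega
    · refine (disjoint_biUnion_left _ _ _).2 fun m hm ↦ disjoint_left.2 fun x hx hx' ↦ ?_
      have := mul_add_lt_mul (mem_Ico.1 hm).2 (show m < r + 1 by simp at hm; omega)
      simp only [block, mem_Icc] at hx hx'
      omega
  have hmid : 2 * #mid + (q + 1) * (q + 2) = r * (r + 1) :=
    two_mul_card_biUnion_Ico_block (by omega) (by omega)
  have hlow_card : #(Icc a (a + q * (r + 1 + 1))) = q * (r + 1 + 1) + 1 := by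
    rw [Nat.card_Icc]
    omega
  have hrn : r * (r + 1) ≤ n * (r + 1 + 1) := Nat.mul_le_mul (by omega) (by omega)
  have htop_card : #(Icc (a + r * (r + 1)) (a + n * (r + 1 + 1))) + r * (r + 1) =
      n * (r + 1 + 1) + 1 := by
    rw [Nat.card_Icc]
    omega
  have hdist : 2 * (q + n) * (r + 1 + 1) = 2 * (q * (r + 1 + 1)) + 2 * (n * (r + 1 + 1)) := by
    ring
  rw [card_union_of_disjoint htop, card_union_of_disjoint hlow, hdist]
  omega

lemma two_mul_card_biUnion_block_le (n : ℕ) :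
    2 * #((range (n + 1)).biUnion (block a p)) ≤ (n + 1) * (n + 2) := by
  have hsum := two_mul_sum_Ico_add_one (b := 0) (c := n + 1) (by omega)
  rw [← range_eq_Ico] at hsum
  calc 2 * #((range (n + 1)).biUnion (block a p)) ≤ 2 * ∑ m ∈ range (n + 1), (m + 1) := by
        gcongr
        exact card_biUnion_le.trans (sum_le_sum fun m _ ↦ (card_block m).le)
    _ = (n + 1) * (n + 2) := by omega

end Blocks

lemma card_Icc_add_one_add {F M n : ℕ} (hM : 1 ≤ M) :
    #(Icc (n + 1) (F + n * M)) + n = F + n * M := by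
  have : n ≤ n * M := Nat.le_mul_of_pos_right n hM
  rw [Nat.card_Icc]
  omega

lemma card_Icc_union_eq {s a c E : ℕ} {Y : Finset ℕ} (hsa : s ≤ a) (hE : E + 1 = a + c)
    (hY : ∀ y ∈ Y, a ≤ y) : #(Icc s E ∪ Y) = (a - s) + #(Ico a (a + c) ∪ Y) := by
  have hIcc : Icc s E = Ico s a ∪ Ico a (a + c) := by
    rw [Ico_union_Ico_eq_Ico hsa (by omega), ← hE, Ico_add_one_right_eq_Icc]
  rw [hIcc, union_assoc, card_union_of_disjoint, Nat.card_Ico]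
  refine disjoint_left.2 fun x hx hx' ↦ ?_
  rw [mem_Ico] at hx
  rcases mem_union.1 hx' with h | h
  · rw [mem_Ico] at h
    omega
  · have := hY x h
    omega

namespace BuchweitzFamily

def F (k : ℕ) : ℕ := 43 + 27 * k + 4 * k ^ 2

def A (k : ℕ) : ℕ := 80 + 51 * k + 8 * k ^ 2

def G (k : ℕ) : Finset ℕ := Icc 1 (F k) ∪ {A k, A k + (2 * k + 5), A k + (2 * k + 5) + 1}

variable (k : ℕ)

lemma card_G : #(G k) = F k + 3 := by
  have : F k < A k := by unfold F A; omega
  have hdisj : Disjoint (Icc 1 (F k)) {A k, A k + (2 * k + 5), A k + (2 * k + 5) + 1} := by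
    simp only [disjoint_left, mem_Icc, mem_insert, mem_singleton]
    omega
  rw [G, card_union_of_disjoint hdisj, Nat.card_Icc,
    card_eq_three.2 ⟨_, _, _, by omega, by omega, by omega, rfl⟩]
  omega

lemma G_subset_Icc : G k ⊆ Icc 1 (A k + (2 * k + 5) + 1) := by
  have : F k < A k := by unfold F A; omega
  intro x
  simp only [G, mem_union, mem_Icc, mem_insert, mem_singleton]
  omega

lemma succ_nsmul_G (n : ℕ) : (n + 1) • G k = Icc (n + 1) (F k + n * (A k + (2 * k + 5) + 1)) ∪
    (range (n + 1 + 1)).biUnion (block ((n + 1) * A k) (2 * k + 5)) := by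
  rw [G, succ_nsmul_gapset (by unfold F; omega) (by unfold F; omega) (by unfold F A; omega)
    (by unfold F A; omega), nsmul_triple]

lemma card_nsmul_G_le_of_le {n : ℕ} (h2 : 2 ≤ n) (hn : n ≤ 2 * k + 6) :
    #(n • G k) ≤ (2 * n - 1) * (F k + 2) := by
  obtain ⟨d, rfl⟩ : ∃ d, n = d + 1 := ⟨n - 1, by omega⟩
  have hI := card_Icc_add_one_add (F := F k) (M := A k + (2 * k + 5) + 1) (n := d) (by omega)
  rw [succ_nsmul_G, show 2 * (d + 1) - 1 = 2 * d + 1 by omega]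
  refine (card_union_le _ _).trans ?_
  obtain hd | rfl : d ≤ 2 * k + 4 ∨ d = 2 * k + 5 := by omega
  · have hX := two_mul_card_biUnion_block_le (a := (d + 1) * A k) (p := 2 * k + 5) (d + 1)
    have hd : d * d ≤ d * (2 * k + 4) := Nat.mul_le_mul_left d hd
    unfold F A at *
    nlinarith
  -- at `n = 2k + 6` the bound by `Σ |blocks|` is one too large; the merging of the top blocks saves it
  · have hX := two_mul_card_Ico_union_biUnion_block (a := (2 * k + 5 + 1) * A k)
      (p := 2 * k + 5) (q := 0) (n := 2 * k + 5 + 1) (by omega) (by omega)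
    rw [zero_mul, add_zero, Ico_self, empty_union, show 2 * k + 5 - 1 = 2 * k + 4 by omega] at hX
    unfold F A at *
    nlinarith

/-- With `n = 2k + 7 + q`: `2|nG| = 2(2n - 1)(|G| - 1) + 2 + (q + 1)(2k - q)`, stated without
subtraction. -/
lemma two_mul_card_nsmul_G {q : ℕ} (hq : q ≤ 2 * k + 3) :
    2 * #((2 * k + 7 + q) • G k) + q * (q + 1) =
      2 * (4 * k + 2 * q + 13) * (F k + 2) + 2 + 2 * k * (q + 1) := by
  have hE : F k + (2 * k + 6 + q) * (A k + (2 * k + 5) + 1) + 1 =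
      (2 * k + 6 + q + 1) * A k + q * (2 * k + 5 + 1) := by
    unfold F A
    ring
  have hnA : 2 * k + 7 + q ≤ (2 * k + 7 + q) * A k :=
    Nat.le_mul_of_pos_right _ (by unfold A; omega)
  have hX := two_mul_card_Ico_union_biUnion_block (a := (2 * k + 7 + q) * A k) (p := 2 * k + 5)
    (q := q) (n := 2 * k + 6 + q + 1) (by omega) (by omega)
  rw [show 2 * k + 7 + q = 2 * k + 6 + q + 1 by omega] at hnA hX ⊢
  rw [succ_nsmul_G, card_Icc_union_eq (by omega) hE ?_]
  · rw [show 2 * k + 5 - 1 = 2 * k + 4 by omega] at hX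
    zify [hnA] at hX ⊢
    unfold F A at *
    push_cast at *
    linarith
  · intro y hy
    obtain ⟨m, -, hm⟩ := mem_biUnion.1 hy
    exact (mem_Icc.1 hm).1.trans' (Nat.le_add_right _ _)

lemma card_nsmul_G_le_of_ge (hk : 1 ≤ k) {n : ℕ} (hn : 4 * k + 9 ≤ n) :
    #(n • G k) ≤ (2 * n - 1) * (F k + 2) := by
  have hsub : n • G k ⊆ Icc n (n * (A k + (2 * k + 5) + 1)) := by
    simpa using nsmul_subset_nsmul_left (n := n) (G_subset_Icc k) |>.trans
      (Nat.nsmul_Icc (by omega) n).subset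
  refine (card_le_card hsub).trans ?_
  have hn' : n ≤ n * (A k + (2 * k + 5) + 1) := Nat.le_mul_of_pos_right n (by omega)
  have hnk := Nat.mul_le_mul_right (k + 5) hn
  rw [Nat.card_Icc]
  zify [hn', show 1 ≤ 2 * n by omega, show n ≤ n * (A k + (2 * k + 5) + 1) + 1 by omega] at *
  unfold F A
  push_cast
  nlinarith

lemma lt_card_nsmul_G_iff (hk : 1 ≤ k) {n : ℕ} (hn : 2 ≤ n) :
    (2 * n - 1) * (F k + 2) < #(n • G k) ↔ 2 * k + 7 ≤ n ∧ n ≤ 4 * k + 7 := by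
  by_cases h6 : n ≤ 2 * k + 6
  · simp only [(card_nsmul_G_le_of_le k hn h6).not_gt, false_iff]
    omega
  by_cases h8 : n ≤ 4 * k + 8
  · obtain ⟨q, rfl⟩ : ∃ q, n = 2 * k + 7 + q := ⟨n - (2 * k + 7), by omega⟩
    have hcard := two_mul_card_nsmul_G k (q := q) (by omega)
    rw [show 2 * (2 * k + 7 + q) - 1 = 4 * k + 2 * q + 13 by omega]
    constructor
    · intro hlt
      refine ⟨by omega, ?_⟩
      by_contra hq
      obtain rfl : q = 2 * k + 1 := by omega
      nlinarith
    · rintro ⟨-, hq⟩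
      have : q * (q + 1) ≤ 2 * k * (q + 1) := Nat.mul_le_mul_right _ (by omega)
      nlinarith
  · simp only [(card_nsmul_G_le_of_ge k hk (n := n) (by omega)).not_gt, false_iff]
    omega

theorem buchweitz_set_G_eq_Icc (hk : 1 ≤ k) :
    {n : ℕ | 2 ≤ n ∧ (2 * n - 1) * ((#(G k) : ℤ) - 1) < (#(n • G k) : ℤ)} =
      Set.Icc (7 + 2 * k) (7 + 4 * k) := by
  ext n
  simp only [Set.mem_ofPred_eq, Set.mem_Icc]
  by_cases hn : 2 ≤ n
  · have hcast : (2 * (n : ℤ) - 1) * ((#(G k) : ℤ) - 1) = (((2 * n - 1) * (F k + 2) : ℕ) : ℤ) := by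
      rw [card_G]
      push_cast [Nat.cast_sub (show 1 ≤ 2 * n by omega)]
      ring
    rw [hcast, Nat.cast_lt, lt_card_nsmul_G_iff k hk hn]
    omega
  · simp only [hn, false_and, false_iff]
    omega

end BuchweitzFamily

theorem stmt18 (k : ℕ) (hk : 1 ≤ k)
    (G : Finset ℕ)
    (hG : G = Finset.Icc 1 (43 + 27 * k + 4 * k ^ 2) ∪
      {80 + 51 * k + 8 * k ^ 2, 85 + 53 * k + 8 * k ^ 2, 86 + 53 * k + 8 * k ^ 2}) :
    ∃ S : Set ℕ, (0 : ℕ) ∈ S ∧ (∀ a ∈ S, ∀ c ∈ S, a + c ∈ S) ∧ Sᶜ.Finite ∧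
      Sᶜ = (↑G : Set ℕ) ∧
      {n : ℕ | 2 ≤ n ∧ (2 * n - 1) * ((G.card : ℤ) - 1) < ((n • G).card : ℤ)} =
        Set.Icc (7 + 2 * k) (7 + 4 * k) := by
  have hGk : G = BuchweitzFamily.G k := by
    ext x
    simp only [hG, BuchweitzFamily.G, BuchweitzFamily.F, BuchweitzFamily.A, mem_union, mem_Icc,
      mem_insert, mem_singleton]
    omega
  refine ⟨(↑G)ᶜ, ?_, ?_, by simp, compl_compl _, hGk ▸ BuchweitzFamily.buchweitz_set_G_eq_Icc k hk⟩
  · simp only [hG, Set.mem_compl_iff, mem_coe, mem_union, mem_Icc, mem_insert, mem_singleton]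
    omega
  · intro a ha c hc
    simp only [hG, Set.mem_compl_iff, mem_coe, mem_union, mem_Icc, mem_insert, mem_singleton] at *
    omega
end
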